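/- arXiv:math/9711226 — 8 statements merged into one kernel-verified Lean document; each statement's English description precedes it below -/
import Mathlib

section
/- Every finite completely 0-simple semigroup is isomorphic to a Rees matrix semigroup ℳ(G,Q) for some finite group G and some regular sandwich matrix Q with entries in G⁰ = G ∪ {0}. -/
/-- A (two-sided) ideal of a semigroup. -/
def IsIdealSet {S : Type*} [Semigroup S] (I : Set S) : Prop :=
  I.Nonempty ∧ ∀ a ∈ I, ∀ s : S, s * a ∈ I ∧ a * s ∈ I

/-- A finite semigroup with zero is completely 0-simple if it is nontrivial, every element
is regular, and its only nonempty ideals are `{0}` and `S`. -/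
def CompletelyZeroSimple (S : Type*) [SemigroupWithZero S] : Prop :=
  (∃ a : S, a ≠ 0) ∧ (∀ a : S, ∃ b : S, a * b * a = a) ∧
    ∀ I : Set S, IsIdealSet I → I = {0} ∨ I = Set.univ

/-- Multiplication in the Rees matrix semigroup `ℳ(G,Q)`: the elements are the triples
`[i, g, λ]` (encoded as `some (i, g, λ)`) together with the zero (encoded as `none`);
`[r,g,α]·[s,h,β] = [r, g·Q(α,s)·h, β]` if `Q(α,s) ≠ 0`, and `= 0` otherwise. -/
def reesMul {G : Type*} [Mul G] {m n : ℕ} (Q : Fin m → Fin n → Option G) :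
    Option (Fin n × G × Fin m) → Option (Fin n × G × Fin m) → Option (Fin n × G × Fin m)
  | some (r, g, α), some (s, h, β) => (Q α s).map fun q => (r, g * q * h, β)
  | _, _ => none

/-- A sandwich matrix is regular if every row and every column has a nonzero entry. -/
def ReesRegular {G : Type*} {m n : ℕ} (Q : Fin m → Fin n → Option G) : Prop :=
  (∀ lam : Fin m, ∃ i, (Q lam i).isSome) ∧ ∀ i : Fin n, ∃ lam, (Q lam i).isSome

/-!
Fix a nonzero idempotent `e`. A finite semigroup is stable, so in a completely 0-simple one
`a * b ≠ 0` forces `a * b 𝓡 a` and `a * b 𝓛 b`. Consequently the nonzero elements of `e S e`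
form a group `H` (the `𝓗`-class of `e`), every nonzero `𝓡`-class meets the `𝓛`-class of `e`
in some `r i`, and every nonzero `𝓛`-class meets the `𝓡`-class of `e` in some `q λ`. Every
nonzero element is then uniquely `r i * g * q λ` with `g ∈ H`, and
`(r i * g * q λ) * (r j * h * q μ) = r i * (g * (q λ * r j) * h) * q μ`, which is the Rees
multiplication with sandwich entries `q λ * r j` (zero or in `H`).
-/

section Finite

variable {S : Type*} [Semigroup S] [Finite S]

theorem Finite.exists_isIdempotentElem_of_mul_mem (s : Set S) (hs : s.Nonempty)
    (hmul : ∀ x ∈ s, ∀ y ∈ s, x * y ∈ s) : ∃ f ∈ s, IsIdempotentElem f := by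
  let : TopologicalSpace S := ⊥
  have : DiscreteTopology S := ⟨rfl⟩
  exact exists_idempotent_in_compact_subsemigroup (fun _ => continuous_of_discreteTopology) s hs
    s.toFinite.isCompact hmul

/-- Finite semigroups are stable: `a 𝒥 ab` implies `a 𝓡 ab`. -/
theorem Finite.stable_right {a b s t : S} (h : a = s * (a * b) * t) : ∃ c, a = a * b * c := by
  obtain ⟨f, ⟨⟨c, rfl⟩, u, hu⟩, hf⟩ := Finite.exists_isIdempotentElem_of_mul_mem
    {y | (∃ c, y = b * c) ∧ ∃ u, a = u * a * y} ⟨b * t, ⟨t, rfl⟩, s, by simpa [mul_assoc] using h⟩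
    (by
      rintro _ ⟨⟨c₁, rfl⟩, u₁, h₁⟩ y ⟨-, u₂, h₂⟩
      exact ⟨⟨c₁ * y, mul_assoc _ _ _⟩, u₂ * u₁, by
        conv_lhs => rw [h₂, h₁]
        simp only [mul_assoc]⟩)
  refine ⟨c, ?_⟩
  calc a = u * a * (b * c) := hu
    _ = u * a * (b * c * (b * c)) := by rw [hf.eq]
    _ = u * a * (b * c) * (b * c) := by simp only [mul_assoc]
    _ = a * b * c := by rw [← hu, mul_assoc]

/-- Finite semigroups are stable: `b 𝒥 ab` implies `b 𝓛 ab`. -/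
theorem Finite.stable_left {a b s t : S} (h : b = s * (a * b) * t) : ∃ c, b = c * a * b := by
  obtain ⟨f, ⟨⟨c, rfl⟩, u, hu⟩, hf⟩ := Finite.exists_isIdempotentElem_of_mul_mem
    {y | (∃ c, y = c * a) ∧ ∃ u, b = y * b * u} ⟨s * a, ⟨s, rfl⟩, t, by simpa [mul_assoc] using h⟩
    (by
      rintro x ⟨-, u₁, h₁⟩ _ ⟨⟨c₂, rfl⟩, u₂, h₂⟩
      exact ⟨⟨x * c₂, (mul_assoc _ _ _).symm⟩, u₂ * u₁, by
        conv_lhs => rw [h₁, h₂]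
        simp only [mul_assoc]⟩)
  refine ⟨c, ?_⟩
  calc b = c * a * b * u := hu
    _ = c * a * (c * a) * b * u := by rw [hf.eq]
    _ = c * a * (c * a * b * u) := by simp only [mul_assoc]
    _ = c * a * b := by rw [← hu]

end Finite

section Green

variable {S : Type*} [Semigroup S]

/-- Green's relation `𝓡` in the form valid for regular semigroups, where `a S¹ = a S`. -/
def GreenR (a b : S) : Prop := (∃ u, a = b * u) ∧ ∃ v, b = a * v

/-- Green's relation `𝓛` in the form valid for regular semigroups, where `S¹ a = S a`. -/
def GreenL (a b : S) : Prop := (∃ u, a = u * b) ∧ ∃ v, b = v * a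

theorem greenR_equivalence (hreg : ∀ a : S, ∃ b, a * b * a = a) :
    Equivalence (GreenR (S := S)) where
  refl a := by
    obtain ⟨b, hb⟩ := hreg a
    exact ⟨⟨b * a, by rw [← mul_assoc, hb]⟩, b * a, by rw [← mul_assoc, hb]⟩
  symm h := ⟨h.2, h.1⟩
  trans := by
    rintro a b c ⟨⟨u₁, hu₁⟩, v₁, hv₁⟩ ⟨⟨u₂, hu₂⟩, v₂, hv₂⟩
    exact ⟨⟨u₂ * u₁, by rw [hu₁, hu₂, mul_assoc]⟩, v₁ * v₂, by rw [hv₂, hv₁, mul_assoc]⟩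

theorem greenL_equivalence (hreg : ∀ a : S, ∃ b, a * b * a = a) :
    Equivalence (GreenL (S := S)) where
  refl a := by
    obtain ⟨b, hb⟩ := hreg a
    exact ⟨⟨a * b, hb.symm⟩, a * b, hb.symm⟩
  symm h := ⟨h.2, h.1⟩
  trans := by
    rintro a b c ⟨⟨u₁, hu₁⟩, v₁, hv₁⟩ ⟨⟨u₂, hu₂⟩, v₂, hv₂⟩
    exact ⟨⟨u₁ * u₂, by rw [hu₁, hu₂, mul_assoc]⟩, v₂ * v₁, by rw [hv₂, hv₁, mul_assoc]⟩

end Green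

theorem exists_fin_transversal {β : Type*} [Finite β] {R : β → β → Prop} (hR : Equivalence R)
    (P : β → Prop) : ∃ (n : ℕ) (r : Fin n → β),
      (∀ i, P (r i)) ∧ ∀ a, (∃ c, P c ∧ R c a) → ∃! i, R (r i) a := by
  let s : Setoid {c // P c} := Setoid.comap Subtype.val ⟨R, hR⟩
  obtain ⟨n, ⟨f⟩⟩ := Finite.exists_equiv_fin (Quotient s)
  refine ⟨n, fun i => (f.symm i).out.1, fun i => (f.symm i).out.2, ?_⟩
  rintro a ⟨c, hc, hca⟩
  have hout (i : Fin n) : R (f.symm i).out.1 c ↔ i = f ⟦⟨c, hc⟩⟧ := by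
    rw [← f.symm_apply_eq, Quotient.eq_mk_iff_out]
    rfl
  refine ⟨f ⟦⟨c, hc⟩⟧, hR.trans ((hout _).2 rfl) hca, fun i hi => (hout i).1 ?_⟩
  exact hR.trans hi (hR.symm hca)

namespace CompletelyZeroSimple

variable {S : Type*} [SemigroupWithZero S]

theorem exists_mul_mul_eq (hS : CompletelyZeroSimple S) {a : S} (ha : a ≠ 0) (x : S) :
    ∃ s t, s * a * t = x := by
  obtain ⟨b, hb⟩ := hS.2.1 a
  have haI : a ∈ {y : S | ∃ s t, s * a * t = y} :=
    ⟨a * b, b * a, by rw [← mul_assoc, hb, hb]⟩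
  have hI : IsIdealSet {y : S | ∃ s t, s * a * t = y} := by
    refine ⟨⟨a, haI⟩, ?_⟩
    rintro _ ⟨s, t, rfl⟩ z
    exact ⟨⟨z * s, t, by simp only [mul_assoc]⟩, s, t * z, by simp only [mul_assoc]⟩
  rcases hS.2.2 _ hI with h | h
  · rw [h] at haI
    exact absurd haI ha
  · exact Set.eq_univ_iff_forall.mp h x

theorem exists_isIdempotentElem_ne_zero (hS : CompletelyZeroSimple S) :
    ∃ e : S, IsIdempotentElem e ∧ e ≠ 0 := by
  obtain ⟨a, ha⟩ := hS.1
  obtain ⟨b, hb⟩ := hS.2.1 a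
  refine ⟨a * b, by rw [IsIdempotentElem, ← mul_assoc, hb], fun h => ha ?_⟩
  rw [← hb, h, zero_mul]

variable [Finite S]

theorem greenR_mul (hS : CompletelyZeroSimple S) {a b : S} (hab : a * b ≠ 0) :
    GreenR (a * b) a := by
  obtain ⟨s, t, h⟩ := hS.exists_mul_mul_eq hab a
  exact ⟨⟨b, rfl⟩, Finite.stable_right h.symm⟩

theorem greenL_mul (hS : CompletelyZeroSimple S) {a b : S} (hab : a * b ≠ 0) :
    GreenL (a * b) b := by
  obtain ⟨s, t, h⟩ := hS.exists_mul_mul_eq hab b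
  obtain ⟨c, hc⟩ := Finite.stable_left h.symm
  exact ⟨⟨a, rfl⟩, c, hc.trans (mul_assoc _ _ _)⟩

theorem exists_leftInv_of_mul_eq_self (hS : CompletelyZeroSimple S) {e x : S}
    (he : IsIdempotentElem e) (hx : x ≠ 0) (hxe : x * e = x) : ∃ y, e * y = y ∧ y * x = e := by
  obtain ⟨v, hv⟩ := (hS.greenL_mul (hxe.symm ▸ hx)).2
  refine ⟨e * v, by rw [← mul_assoc, he.eq], ?_⟩
  rw [mul_assoc, ← hxe, ← hv, he.eq]

theorem exists_rightInv_of_self_mul_eq (hS : CompletelyZeroSimple S) {e x : S}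
    (he : IsIdempotentElem e) (hx : x ≠ 0) (hex : e * x = x) : ∃ y, y * e = y ∧ x * y = e := by
  obtain ⟨v, hv⟩ := (hS.greenR_mul (hex.symm ▸ hx)).2
  refine ⟨v * e, by rw [mul_assoc, he.eq], ?_⟩
  rw [← mul_assoc, ← hex, ← hv, he.eq]

theorem exists_greenR_mul_eq_self (hS : CompletelyZeroSimple S) {e a : S}
    (he : IsIdempotentElem e) (he0 : e ≠ 0) (ha : a ≠ 0) :
    ∃ c, (c ≠ 0 ∧ c * e = c) ∧ GreenR c a := by
  obtain ⟨u, v, huv⟩ := hS.exists_mul_mul_eq ha e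
  have hc : a * (v * e) ≠ 0 := fun h => he0 <|
    calc e = u * a * v * e := by rw [huv, he.eq]
      _ = u * (a * (v * e)) := by simp only [mul_assoc]
      _ = 0 := by rw [h, mul_zero]
  exact ⟨a * (v * e), ⟨hc, by rw [mul_assoc, mul_assoc, he.eq]⟩, hS.greenR_mul hc⟩

theorem exists_greenL_self_mul_eq (hS : CompletelyZeroSimple S) {e a : S}
    (he : IsIdempotentElem e) (he0 : e ≠ 0) (ha : a ≠ 0) :
    ∃ c, (c ≠ 0 ∧ e * c = c) ∧ GreenL c a := by
  obtain ⟨u, v, huv⟩ := hS.exists_mul_mul_eq ha e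
  have hc : e * u * a ≠ 0 := fun h => he0 <|
    calc e = e * (u * a * v) := by rw [huv, he.eq]
      _ = e * u * a * v := by simp only [mul_assoc]
      _ = 0 := by rw [h, zero_mul]
  exact ⟨e * u * a, ⟨hc, by rw [← mul_assoc, ← mul_assoc, he.eq]⟩, hS.greenL_mul hc⟩

end CompletelyZeroSimple

section HClass

variable {S : Type*} [SemigroupWithZero S]

/-- The nonzero part of the corner `e S e`. For a nonzero idempotent `e` of a completely
0-simple semigroup this is the `𝓗`-class of `e`. -/
def hClass (e : S) : Set S := {x | x ≠ 0 ∧ e * x = x ∧ x * e = x}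

theorem mem_hClass_self {e : S} (he : IsIdempotentElem e) (he0 : e ≠ 0) : e ∈ hClass e :=
  ⟨he0, he.eq, he.eq⟩

variable [Finite S]

theorem CompletelyZeroSimple.mul_mem_hClass (hS : CompletelyZeroSimple S) {e x y : S}
    (he : IsIdempotentElem e) (hx : x ∈ hClass e) (hy : y ∈ hClass e) : x * y ∈ hClass e := by
  obtain ⟨x', -, hx'⟩ := hS.exists_leftInv_of_mul_eq_self he hx.1 hx.2.2
  obtain ⟨y', -, hy'⟩ := hS.exists_rightInv_of_self_mul_eq he hy.1 hy.2.1
  refine ⟨fun h => hx.1 ?_, by rw [← mul_assoc, hx.2.1], by rw [mul_assoc, hy.2.2]⟩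
  calc x = x' * x * (y * y') * x := by rw [hx', hy', he.eq, hx.2.1]
    _ = x' * (x * y) * y' * x := by simp only [mul_assoc]
    _ = 0 := by rw [h, mul_zero, zero_mul, zero_mul]

theorem CompletelyZeroSimple.exists_inv_mem_hClass (hS : CompletelyZeroSimple S) {e x : S}
    (he : IsIdempotentElem e) (hx : x ∈ hClass e) : ∃ y ∈ hClass e, y * x = e := by
  obtain ⟨y, hey, hyx⟩ := hS.exists_leftInv_of_mul_eq_self he hx.1 hx.2.2
  have hyex : y * e * x = e := by rw [mul_assoc, hx.2.1, hyx]
  refine ⟨y * e, ⟨fun h => hx.1 ?_, by rw [← mul_assoc, hey], by rw [mul_assoc, he.eq]⟩, hyex⟩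
  rw [← hx.2.1, ← hyex, h, zero_mul, zero_mul]

noncomputable abbrev CompletelyZeroSimple.hClassGroup (hS : CompletelyZeroSimple S) {e : S}
    (he : IsIdempotentElem e) (he0 : e ≠ 0) : Group (hClass e) :=
  letI : Mul (hClass e) := ⟨fun x y => ⟨x * y, hS.mul_mem_hClass he x.2 y.2⟩⟩
  letI : One (hClass e) := ⟨⟨e, mem_hClass_self he he0⟩⟩
  letI : Inv (hClass e) := ⟨fun x => ⟨_, (hS.exists_inv_mem_hClass he x.2).choose_spec.1⟩⟩
  Group.ofLeftAxioms (fun x y z => Subtype.ext (mul_assoc (x : S) y z))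
    (fun x => Subtype.ext x.2.2.1)
    (fun x => Subtype.ext (hS.exists_inv_mem_hClass he x.2).choose_spec.2)

end HClass

/-- Representatives `row i` of the nonzero `𝓡`-classes, chosen in the `𝓛`-class of `e`, and
`col l` of the nonzero `𝓛`-classes, chosen in the `𝓡`-class of `e`, together with inverses
relative to `e`. -/
structure ReesCoordinates {S : Type*} [SemigroupWithZero S] (e : S) (n m : ℕ) where
  row : Fin n → S
  col : Fin m → S
  rowInv : Fin n → S
  colInv : Fin m → S
  row_mul_e : ∀ i, row i * e = row i
  e_mul_col : ∀ l, e * col l = col l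
  e_mul_rowInv : ∀ i, e * rowInv i = rowInv i
  colInv_mul_e : ∀ l, colInv l * e = colInv l
  rowInv_mul_row : ∀ i, rowInv i * row i = e
  col_mul_colInv : ∀ l, col l * colInv l = e
  existsUnique_greenR : ∀ a ≠ 0, ∃! i, GreenR (row i) a
  existsUnique_greenL : ∀ a ≠ 0, ∃! l, GreenL (col l) a

namespace ReesCoordinates

variable {S : Type*} [SemigroupWithZero S] {e : S} {n m : ℕ} (C : ReesCoordinates e n m)

open Classical in
noncomputable def sandwich (l : Fin m) (i : Fin n) : Option (hClass e) :=
  if h : C.col l * C.row i = 0 then none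
  else some ⟨C.col l * C.row i, h, by rw [← mul_assoc, C.e_mul_col],
    by rw [mul_assoc, C.row_mul_e]⟩

def eval : Option (Fin n × hClass e × Fin m) → S
  | none => 0
  | some (i, g, l) => C.row i * g * C.col l

theorem rowInv_mul_eval_mul_colInv (i : Fin n) (g : hClass e) (l : Fin m) :
    C.rowInv i * C.eval (some (i, g, l)) * C.colInv l = g :=
  calc C.rowInv i * (C.row i * g * C.col l) * C.colInv l
      = C.rowInv i * C.row i * g * (C.col l * C.colInv l) := by simp only [mul_assoc]
    _ = g := by rw [C.rowInv_mul_row, C.col_mul_colInv, g.2.2.1, g.2.2.2]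

theorem eval_some_ne_zero (i : Fin n) (g : hClass e) (l : Fin m) :
    C.eval (some (i, g, l)) ≠ 0 := fun h => g.2.1 <| by
  rw [← C.rowInv_mul_eval_mul_colInv i g l, h, mul_zero, zero_mul]

theorem row_mul_rowInv_mul {i : Fin n} {a : S} (h : GreenR (C.row i) a) :
    C.row i * (C.rowInv i * a) = a := by
  obtain ⟨v, rfl⟩ := h.2
  rw [← mul_assoc, ← mul_assoc, mul_assoc _ _ (C.row i), C.rowInv_mul_row, C.row_mul_e]

theorem mul_colInv_mul_col {l : Fin m} {a : S} (h : GreenL (C.col l) a) :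
    a * C.colInv l * C.col l = a := by
  obtain ⟨v, rfl⟩ := h.2
  rw [mul_assoc, mul_assoc, ← mul_assoc (C.col l), C.col_mul_colInv, C.e_mul_col]

theorem eval_surjective : Function.Surjective C.eval := by
  intro a
  by_cases ha : a = 0
  · exact ⟨none, ha.symm⟩
  obtain ⟨i, hi, -⟩ := C.existsUnique_greenR a ha
  obtain ⟨l, hl, -⟩ := C.existsUnique_greenL a ha
  have hg : C.row i * (C.rowInv i * a * C.colInv l) * C.col l = a :=
    calc _ = C.row i * (C.rowInv i * (a * C.colInv l * C.col l)) := by simp only [mul_assoc]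
      _ = a := by rw [C.mul_colInv_mul_col hl, C.row_mul_rowInv_mul hi]
  refine ⟨some (i, ⟨C.rowInv i * a * C.colInv l, ?_, ?_, ?_⟩, l), hg⟩
  · rintro h
    rw [h, mul_zero, zero_mul] at hg
    exact ha hg.symm
  · rw [← mul_assoc, ← mul_assoc, C.e_mul_rowInv]
  · rw [mul_assoc, C.colInv_mul_e]

theorem row_ne_zero (he0 : e ≠ 0) (i : Fin n) : C.row i ≠ 0 := fun h => he0 <| by
  rw [← C.rowInv_mul_row i, h, mul_zero]

theorem col_ne_zero (he0 : e ≠ 0) (l : Fin m) : C.col l ≠ 0 := fun h => he0 <| by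
  rw [← C.col_mul_colInv l, h, zero_mul]

theorem sandwich_isSome_iff (l : Fin m) (i : Fin n) :
    (C.sandwich l i).isSome ↔ C.col l * C.row i ≠ 0 := by
  unfold sandwich
  split_ifs with h <;> simp [h]

theorem sandwich_regular (hreg : ∀ a : S, ∃ b, a * b * a = a) (he0 : e ≠ 0) :
    ReesRegular C.sandwich := by
  constructor
  · intro l
    obtain ⟨s, hs⟩ := hreg (C.col l)
    have hsq : s * C.col l ≠ 0 := fun h => C.col_ne_zero he0 l <| by
      rw [← hs, mul_assoc, h, mul_zero]
    obtain ⟨i, hi, -⟩ := C.existsUnique_greenR _ hsq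
    obtain ⟨v, hv⟩ := hi.2
    refine ⟨i, (C.sandwich_isSome_iff l i).2 fun h => C.col_ne_zero he0 l ?_⟩
    rw [← hs, mul_assoc, hv, ← mul_assoc, h, zero_mul]
  · intro i
    obtain ⟨s, hs⟩ := hreg (C.row i)
    have hrs : C.row i * s ≠ 0 := fun h => C.row_ne_zero he0 i <| by
      rw [← hs, h, zero_mul]
    obtain ⟨l, hl, -⟩ := C.existsUnique_greenL _ hrs
    obtain ⟨v, hv⟩ := hl.2
    refine ⟨l, (C.sandwich_isSome_iff l i).2 fun h => C.row_ne_zero he0 i ?_⟩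
    rw [← hs, hv, mul_assoc, h, mul_zero]

variable [Finite S]

theorem greenR_row_eval (hS : CompletelyZeroSimple S) (i : Fin n) (g : hClass e) (l : Fin m) :
    GreenR (C.row i) (C.eval (some (i, g, l))) :=
  (greenR_equivalence hS.2.1).symm <| by
    simpa only [eval, mul_assoc] using hS.greenR_mul (a := C.row i) (b := g * C.col l)
      (by simpa only [eval, mul_assoc] using C.eval_some_ne_zero i g l)

theorem greenL_col_eval (hS : CompletelyZeroSimple S) (i : Fin n) (g : hClass e) (l : Fin m) :
    GreenL (C.col l) (C.eval (some (i, g, l))) :=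
  (greenL_equivalence hS.2.1).symm (hS.greenL_mul (C.eval_some_ne_zero i g l))

theorem eval_injective (hS : CompletelyZeroSimple S) : Function.Injective C.eval := by
  rintro (_ | ⟨i, g, l⟩) (_ | ⟨j, h, k⟩) hgh
  · rfl
  · exact absurd hgh.symm (C.eval_some_ne_zero j h k)
  · exact absurd hgh (C.eval_some_ne_zero i g l)
  have hne := C.eval_some_ne_zero i g l
  obtain rfl : i = j := (C.existsUnique_greenR _ hne).unique
    (C.greenR_row_eval hS i g l) (hgh ▸ C.greenR_row_eval hS j h k)
  obtain rfl : l = k := (C.existsUnique_greenL _ hne).unique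
    (C.greenL_col_eval hS i g l) (hgh ▸ C.greenL_col_eval hS i h k)
  have hgh' : (g : S) = h := by
    rw [← C.rowInv_mul_eval_mul_colInv i g l, hgh, C.rowInv_mul_eval_mul_colInv]
  rw [Subtype.ext hgh']

theorem eval_reesMul (hS : CompletelyZeroSimple S) (he : IsIdempotentElem e) (he0 : e ≠ 0)
    (u v : Option (Fin n × hClass e × Fin m)) :
    let := hS.hClassGroup he he0
    C.eval (reesMul C.sandwich u v) = C.eval u * C.eval v := by
  rcases u with _ | ⟨i, g, l⟩
  · simp only [eval, reesMul, zero_mul]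
  rcases v with _ | ⟨j, h, k⟩
  · simp only [eval, reesMul, mul_zero]
  have hmul : C.eval (some (i, g, l)) * C.eval (some (j, h, k)) =
      C.row i * (g * (C.col l * C.row j) * h) * C.col k := by
    simp only [eval, mul_assoc]
  by_cases hlj : C.col l * C.row j = 0
  · rw [hmul, hlj]
    simp only [reesMul, sandwich, hlj, ↓reduceDIte, Option.map_none, eval, mul_zero, zero_mul]
  · rw [hmul]
    simp only [reesMul, sandwich, hlj, ↓reduceDIte, Option.map_some, eval]
    rfl

end ReesCoordinates

theorem CompletelyZeroSimple.exists_reesCoordinates {S : Type*} [SemigroupWithZero S] [Finite S]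
    (hS : CompletelyZeroSimple S) {e : S} (he : IsIdempotentElem e) (he0 : e ≠ 0) :
    ∃ n m, Nonempty (ReesCoordinates e n m) := by
  obtain ⟨n, r, hr, hr_unique⟩ :=
    exists_fin_transversal (greenR_equivalence hS.2.1) fun c => c ≠ 0 ∧ c * e = c
  obtain ⟨m, q, hq, hq_unique⟩ :=
    exists_fin_transversal (greenL_equivalence hS.2.1) fun c => c ≠ 0 ∧ e * c = c
  choose X hX using fun i => hS.exists_leftInv_of_mul_eq_self he (hr i).1 (hr i).2
  choose W hW using fun l => hS.exists_rightInv_of_self_mul_eq he (hq l).1 (hq l).2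
  exact ⟨n, m, ⟨{
    row := r
    col := q
    rowInv := X
    colInv := W
    row_mul_e := fun i => (hr i).2
    e_mul_col := fun l => (hq l).2
    e_mul_rowInv := fun i => (hX i).1
    colInv_mul_e := fun l => (hW l).1
    rowInv_mul_row := fun i => (hX i).2
    col_mul_colInv := fun l => (hW l).2
    existsUnique_greenR := fun _ ha => hr_unique _ (hS.exists_greenR_mul_eq_self he he0 ha)
    existsUnique_greenL := fun _ ha => hq_unique _ (hS.exists_greenL_self_mul_eq he he0 ha) }⟩⟩

theorem ReesRegular.map {G H : Type*} {n m : ℕ} {Q : Fin m → Fin n → Option G}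
    (hQ : ReesRegular Q) (f : G → H) : ReesRegular fun l i => (Q l i).map f :=
  ⟨fun l => by simpa using hQ.1 l, fun i => by simpa using hQ.2 i⟩

section Reindex

variable {G H : Type*} [Mul G] [Mul H] {n m : ℕ}

def reesCongr (μ : G ≃* H) : Option (Fin n × G × Fin m) ≃ Option (Fin n × H × Fin m) :=
  Equiv.optionCongr ((Equiv.refl _).prodCongr (μ.toEquiv.prodCongr (Equiv.refl _)))

theorem reesCongr_reesMul (μ : G ≃* H) (Q : Fin m → Fin n → Option G)
    (u v : Option (Fin n × G × Fin m)) :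
    reesCongr μ (reesMul Q u v) =
      reesMul (fun l i => (Q l i).map μ) (reesCongr μ u) (reesCongr μ v) := by
  rcases u with _ | ⟨i, g, l⟩ <;> rcases v with _ | ⟨j, h, k⟩ <;> try rfl
  rcases hQ : Q l j with _ | p <;> simp [reesCongr, reesMul, hQ]

end Reindex

/-- **Rees Matrix Theorem.** Every finite completely 0-simple semigroup is isomorphic to a
Rees matrix semigroup `ℳ(G,Q)` over a finite group `G` with a regular sandwich matrix `Q`. -/
theorem rees_matrix_theorem {S : Type*} [SemigroupWithZero S] [Fintype S]
    (hS : CompletelyZeroSimple S) :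
    ∃ (m n : ℕ) (G : Type) (_ : Group G) (_ : Fintype G)
      (Q : Fin m → Fin n → Option G), ReesRegular Q ∧
      ∃ φ : S ≃ Option (Fin n × G × Fin m),
        ∀ x y : S, φ (x * y) = reesMul Q (φ x) (φ y) := by
  obtain ⟨e, he, he0⟩ := hS.exists_isIdempotentElem_ne_zero
  obtain ⟨n, m, ⟨C⟩⟩ := hS.exists_reesCoordinates he he0
  let := hS.hClassGroup he he0
  obtain ⟨G, hG, hGfin, ⟨μ⟩⟩ := Finite.exists_type_univ_nonempty_mulEquiv.{_, 0} (hClass e)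
  let ψ := Equiv.ofBijective C.eval ⟨C.eval_injective hS, C.eval_surjective⟩
  have hψ (x y : S) : ψ.symm (x * y) = reesMul C.sandwich (ψ.symm x) (ψ.symm y) := by
    rw [ψ.symm_apply_eq]
    change x * y = C.eval _
    rw [C.eval_reesMul hS he he0]
    exact congrArg₂ (· * ·) (ψ.apply_symm_apply x).symm (ψ.apply_symm_apply y).symm
  refine ⟨m, n, G, hG, hGfin, _, (C.sandwich_regular hS.2.1 he0).map μ, ψ.symm.trans (reesCongr μ),
    fun x y => ?_⟩
  rw [Equiv.trans_apply, hψ, reesCongr_reesMul]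
  rfl
end

section
/- Let (Y;J;γ) be an R-representation of the maximal 𝒥-class J of a finite completely 0-simple semigroup, and let e, f ∈ J be idempotents. Then the group representation of eJe ∩ J on γ(e)(Y) (where eje acts by the restriction of γ(eje) to γ(e)(Y)) is equivalent to the group representation of fJf ∩ J on γ(f)(Y). -/
/-- For an idempotent `e` in the maximal 𝒥-class `J = S \ {0}` of a completely 0-simple
semigroup, `eSe ∩ J`. -/
def eSeJ {S : Type*} [SemigroupWithZero S] (e : S) : Set S :=
  {x : S | x ≠ 0 ∧ ∃ s : S, x = e * s * e}

private lemma MNL.K2 {S : Type*} [Semigroup S] {p q c : S} (h : p * q = c) (z : S) :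
    p * (q * z) = c * z := by rw [← mul_assoc, h]

private lemma MNL.K3 {S : Type*} [Semigroup S] {p q r c : S} (h : p * q * r = c) (z : S) :
    p * (q * (r * z)) = c * z := by rw [← mul_assoc, ← mul_assoc, h]

/-- right powers: spw a n = a^(n+1) -/
private def MNL.spw {S : Type*} [Semigroup S] (a : S) : ℕ → S
  | 0 => a
  | n+1 => MNL.spw a n * a

/-- left powers -/
private def MNL.spwl {S : Type*} [Semigroup S] (a : S) : ℕ → S
  | 0 => a
  | n+1 => a * MNL.spwl a n

private lemma MNL.spw_add {S : Type*} [Semigroup S] (a : S) (i j : ℕ) :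
    MNL.spw a (i + j + 1) = MNL.spw a i * MNL.spw a j := by
  induction j with
  | zero => rfl
  | succ j ih =>
      show MNL.spw a (i + j + 1) * a = _
      rw [ih, mul_assoc]
      rfl

/-- Lemma A: sandwich from 0-simplicity. -/
private lemma MNL.exists_sandwich {S : Type*} [SemigroupWithZero S]
    (hS : CompletelyZeroSimple S) (e f : S) (hee : e * e = e)
    (he0 : e ≠ 0) (hf0 : f ≠ 0) : ∃ x y : S, x * f * y = e := by
  obtain ⟨-, -, hideal⟩ := hS
  set I : Set S := {0, f} ∪ Set.range (f * ·) ∪ Set.range (· * f) ∪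
    {z | ∃ s t, z = s * f * t} with hI
  have memf : f ∈ I := Or.inl (Or.inl (Or.inl (by simp)))
  have mem0 : (0 : S) ∈ I := Or.inl (Or.inl (Or.inl (by simp)))
  have hIdeal : IsIdealSet I := by
    refine ⟨⟨f, memf⟩, ?_⟩
    rintro a ha s
    rcases ha with ((h0f | ⟨t, ht⟩) | ⟨t, ht⟩) | ⟨s', t, rfl⟩
    · rcases h0f with rfl | rfl
      · exact ⟨by simpa using mem0, by simpa using mem0⟩
      · exact ⟨Or.inl (Or.inr ⟨s, by simp⟩), Or.inl (Or.inl (Or.inr ⟨s, by simp⟩))⟩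
    · -- a = f * t
      simp only at ht
      subst ht
      refine ⟨Or.inr ⟨s, t, by rw [mul_assoc]⟩, Or.inl (Or.inl (Or.inr ⟨t * s, by simp [mul_assoc]⟩))⟩
    · -- a = t * f
      simp only at ht
      subst ht
      refine ⟨Or.inl (Or.inr ⟨s * t, by simp [mul_assoc]⟩), Or.inr ⟨t, s, by rw [mul_assoc]⟩⟩
    · refine ⟨Or.inr ⟨s * s', t, by simp [mul_assoc]⟩, Or.inr ⟨s', t * s, by simp [mul_assoc]⟩⟩
  rcases hideal I hIdeal with h | h
  · exfalso
    rw [h] at memf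
    exact hf0 memf
  · have heI : e ∈ I := by rw [h]; trivial
    rcases heI with ((h0f | ⟨t, ht⟩) | ⟨t, ht⟩) | ⟨s', t, ht⟩
    · rcases h0f with rfl | rfl
      · exact absurd rfl he0
      · exact ⟨e, e, by rw [hee, hee]⟩
    · simp only at ht
      exact ⟨e, t, by rw [mul_assoc, ht, hee]⟩
    · simp only at ht
      exact ⟨t, t * f, by rw [ht, hee]⟩
    · exact ⟨s', t, ht.symm⟩


/-- Lemma B: conjugating pair between two nonzero idempotents. -/
private lemma MNL.exists_uv {S : Type*} [SemigroupWithZero S] [Fintype S]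
    (hS : CompletelyZeroSimple S) (e f : S)
    (he0 : e ≠ 0) (hee : e * e = e) (hf0 : f ≠ 0) (hff : f * f = f) :
    ∃ u v : S, u * v = e ∧ v * u = f ∧ e * u = u ∧ u * f = u ∧ f * v = v ∧ v * e = v := by
  obtain ⟨x, y, hxy⟩ := MNL.exists_sandwich hS e f hee he0 hf0
  set a := e * x * f with ha
  set b := f * y * e with hb
  have hea : e * a = a := by rw [ha, ← mul_assoc, ← mul_assoc, hee]
  have haf : a * f = a := by rw [ha, mul_assoc (e * x), hff]
  have hfb : f * b = b := by rw [hb, ← mul_assoc, ← mul_assoc, hff]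
  have hbe : b * e = b := by rw [hb, mul_assoc (f * y), hee]
  have hab : a * b = e := by
    rw [ha, hb]
    simp only [mul_assoc]
    rw [MNL.K2 hff, MNL.K3 hxy, MNL.K2 hee, hee]
  set g := b * a with hg
  have hgg : g * g = g := by
    rw [hg]
    simp only [mul_assoc]
    rw [MNL.K2 hab, hea]
  have hfg : f * g = g := by rw [hg, ← mul_assoc, hfb]
  have hgf : g * f = g := by rw [hg, mul_assoc, haf]
  have hagb : a * g * b = e := by
    rw [hg]
    simp only [mul_assoc]
    rw [hab, hbe, hab]
  have hg0 : g ≠ 0 := by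
    intro h
    rw [h, mul_zero, zero_mul] at hagb
    exact he0 hagb.symm
  obtain ⟨x', y', hxy'⟩ := MNL.exists_sandwich hS f g hff hf0 hg0
  set a' := f * x' * g with ha'
  set b' := g * y' * f with hb'
  have ha'g : a' * g = a' := by rw [ha', mul_assoc (f * x'), hgg]
  have ha'f : a' * f = a' := by rw [ha', mul_assoc (f * x'), hgf]
  have hfb' : f * b' = b' := by rw [hb', ← mul_assoc, ← mul_assoc, hfg]
  have hab' : a' * b' = f := by
    rw [ha', hb']
    simp only [mul_assoc]
    rw [MNL.K2 hgg, MNL.K3 hxy', MNL.K2 hff, hff]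
  have hpf : ∀ n, MNL.spw a' n * f = MNL.spw a' n := by
    intro n
    induction n with
    | zero => exact ha'f
    | succ n ih => show MNL.spw a' n * a' * f = _; rw [mul_assoc, ha'f]; rfl
  have hpg : ∀ n, MNL.spw a' n * g = MNL.spw a' n := by
    intro n
    induction n with
    | zero => exact ha'g
    | succ n ih => show MNL.spw a' n * a' * g = _; rw [mul_assoc, ha'g]; rfl
  have hfl : ∀ n, f * MNL.spwl b' n = MNL.spwl b' n := by
    intro n
    induction n with
    | zero => exact hfb'
    | succ n ih => show f * (b' * MNL.spwl b' n) = _; rw [← mul_assoc, hfb']; rfl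
  have hprod : ∀ n, MNL.spw a' n * MNL.spwl b' n = f := by
    intro n
    induction n with
    | zero => exact hab'
    | succ n ih =>
        show MNL.spw a' n * a' * (b' * MNL.spwl b' n) = f
        rw [mul_assoc, ← mul_assoc a' b', hab', hfl n]
        exact ih
  have key : ∀ m n : ℕ, m < n → MNL.spw a' m = MNL.spw a' n → g = f := by
    intro m n hlt hs
    obtain ⟨k, rfl⟩ : ∃ k, n = k + m + 1 := ⟨n - m - 1, by omega⟩
    have hsplit : MNL.spw a' (k + m + 1) = MNL.spw a' k * MNL.spw a' m := MNL.spw_add a' k m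
    have h1 : MNL.spw a' m = MNL.spw a' k * MNL.spw a' m := by rw [← hsplit, ← hs]
    have hfk : MNL.spw a' k = f := by
      calc MNL.spw a' k = MNL.spw a' k * f := (hpf k).symm
        _ = MNL.spw a' k * (MNL.spw a' m * MNL.spwl b' m) := by rw [hprod m]
        _ = MNL.spw a' k * MNL.spw a' m * MNL.spwl b' m := by rw [mul_assoc]
        _ = MNL.spw a' m * MNL.spwl b' m := by rw [← h1]
        _ = f := hprod m
    calc g = f * g := hfg.symm
      _ = MNL.spw a' k * g := by rw [hfk]
      _ = MNL.spw a' k := hpg k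
      _ = f := hfk
  obtain ⟨m, n, hmn, hspw⟩ := Finite.exists_ne_map_eq_of_infinite (MNL.spw a')
  have hgfeq : g = f := by
    rcases hmn.lt_or_gt with h | h
    · exact key m n h hspw
    · exact key n m h hspw.symm
  refine ⟨a, b, hab, ?_, hea, haf, hfb, hbe⟩
  rw [← hg]
  exact hgfeq

/-- **Minimal Neighborhoods Lemma.** Let `(Y;J;γ)` be an R-representation of the maximal
𝒥-class `J = S \ {0}` of a finite completely 0-simple semigroup `S`, and let `e, f ∈ J` be
idempotents.  Then the group representation of `eJe ∩ J` on `γ(e)(Y)` (each `x ∈ eJe ∩ J`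
acting by the restriction of `γ(x)`) is equivalent to the group representation of
`fJf ∩ J` on `γ(f)(Y)`.  The equivalence is witnessed by a bijection `b` between the carrier
sets together with a correspondence `σ` between the acting elements which induces a
bijection between the two sets of (restricted) transformations: `σ` carries `eJe ∩ J` into
`fJf ∩ J`, is compatible with the actions (which forces the induced map on restricted
transformations to be well defined and injective), and every transformation of the second
representation is induced by some `σ x`. -/
theorem minimal_neighborhoods_lemma {S Y : Type*} [SemigroupWithZero S] [Fintype S]
    [Fintype Y] (hS : CompletelyZeroSimple S)
    (γ : S → Y → Y)
    (hγ : ∀ j k : S, j ≠ 0 → k ≠ 0 → j * k ≠ 0 → γ (j * k) = γ j ∘ γ k)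
    (e f : S) (he0 : e ≠ 0) (hee : e * e = e) (hf0 : f ≠ 0) (hff : f * f = f) :
    ∃ (b : Y → Y) (σ : S → S),
      Set.BijOn b (Set.range (γ e)) (Set.range (γ f)) ∧
      (∀ x ∈ eSeJ e, σ x ∈ eSeJ f) ∧
      (∀ x ∈ eSeJ e, ∀ y ∈ Set.range (γ e), b (γ x y) = γ (σ x) (b y)) ∧
      (∀ x' ∈ eSeJ f, ∃ x ∈ eSeJ e, ∀ y ∈ Set.range (γ f), γ (σ x) y = γ x' y) := by
  obtain ⟨u, v, huv, hvu, heu, huf, hfv, hve⟩ := MNL.exists_uv hS e f he0 hee hf0 hff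
  have hu0 : u ≠ 0 := fun h => he0 (by rw [← huv, h, zero_mul])
  have hv0 : v ≠ 0 := fun h => hf0 (by rw [← hvu, h, zero_mul])
  have γee : γ e = γ e ∘ γ e := by
    have h := hγ e e he0 he0 (by rw [hee]; exact he0); rwa [hee] at h
  have γfv : γ v = γ f ∘ γ v := by
    have h := hγ f v hf0 hv0 (by rw [hfv]; exact hv0); rwa [hfv] at h
  have γuv : γ e = γ u ∘ γ v := by
    have h := hγ u v hu0 hv0 (by rw [huv]; exact he0); rwa [huv] at h
  have γvu : γ f = γ v ∘ γ u := by
    have h := hγ v u hv0 hu0 (by rw [hvu]; exact hf0); rwa [hvu] at h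
  have γeu : γ u = γ e ∘ γ u := by
    have h := hγ e u he0 hu0 (by rw [heu]; exact hu0); rwa [heu] at h
  have fixe : ∀ z ∈ Set.range (γ e), γ e z = z := by
    rintro z ⟨w, rfl⟩; exact (congrFun γee w).symm
  have hmem : ∀ x, x ∈ eSeJ e →
      e * x = x ∧ x * e = x ∧ v * x * u ≠ 0 ∧ v * x ≠ 0 := by
    rintro x ⟨hx0, s, hs⟩
    have hex : e * x = x := by rw [hs, ← mul_assoc, ← mul_assoc, hee]
    have hxe : x * e = x := by rw [hs, mul_assoc (e * s), hee]
    have huvxuv : u * (v * x * u) * v = x := by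
      simp only [mul_assoc]
      rw [huv, hxe, ← mul_assoc, huv, hex]
    have h1 : v * x * u ≠ 0 := by
      intro h
      rw [h, mul_zero, zero_mul] at huvxuv
      exact hx0 huvxuv.symm
    exact ⟨hex, hxe, h1, fun h => h1 (by rw [h, zero_mul])⟩
  refine ⟨γ v, fun x => v * x * u, ⟨?_, ?_, ?_⟩, ?_, ?_, ?_⟩
  · rintro z -
    exact ⟨γ v z, (congrFun γfv z).symm⟩
  · intro z1 hz1 z2 hz2 h
    calc z1 = γ e z1 := (fixe z1 hz1).symm
      _ = γ u (γ v z1) := congrFun γuv z1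
      _ = γ u (γ v z2) := by rw [h]
      _ = γ e z2 := (congrFun γuv z2).symm
      _ = z2 := fixe z2 hz2
  · rintro z ⟨w, rfl⟩
    exact ⟨γ u w, ⟨γ u w, (congrFun γeu w).symm⟩, (congrFun γvu w).symm⟩
  · intro x hx
    obtain ⟨hex, hxe, h1, h2⟩ := hmem x hx
    refine ⟨h1, v * x * u, ?_⟩
    have : f * (v * x * u) * f = v * x * u := by
      simp only [mul_assoc]
      rw [huf, ← mul_assoc f v, hfv]
    exact this.symm
  · intro x hx y hy
    obtain ⟨hex, hxe, hσ0, hvx0⟩ := hmem x hx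
    obtain ⟨hx0, -⟩ := hx
    have γvx : γ (v * x) = γ v ∘ γ x := hγ v x hv0 hx0 hvx0
    have hσv : v * x * u * v = v * x := by
      rw [mul_assoc (v * x), huv, mul_assoc, hxe]
    have γσv : γ (v * x) = γ (v * x * u) ∘ γ v := by
      have h := hγ (v * x * u) v hσ0 hv0 (by rw [hσv]; exact hvx0)
      rwa [hσv] at h
    calc γ v (γ x y) = γ (v * x) y := (congrFun γvx y).symm
      _ = γ (v * x * u) (γ v y) := congrFun γσv y
  · rintro x' ⟨hx'0, s, hs⟩
    have hfx : f * x' = x' := by rw [hs, ← mul_assoc, ← mul_assoc, hff]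
    have hxf : x' * f = x' := by rw [hs, mul_assoc (f * s), hff]
    have hσx : v * (u * x' * v) * u = x' := by
      simp only [mul_assoc]
      rw [hvu, hxf, ← mul_assoc, hvu, hfx]
    have hx0 : u * x' * v ≠ 0 := by
      intro h
      rw [h, mul_zero, zero_mul] at hσx
      exact hx'0 hσx.symm
    refine ⟨u * x' * v, ⟨hx0, u * x' * v, ?_⟩, ?_⟩
    · have : e * (u * x' * v) * e = u * x' * v := by
        simp only [mul_assoc]
        rw [hve, ← mul_assoc, heu]
      exact this.symm
    · intro y hy
      show γ (v * (u * x' * v) * u) y = γ x' y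
      rw [hσx]
end

section
/- Let (X;G) be a faithful group representation, P a regular ramified m×n matrix over (X;G), and α a deflationary equivalence contained in θ_P; consider the induced action of J((X;G);P) on V_α. For [r,g,μ], [s,h,β] ∈ J((X;G);P) with μ ≠ β, the transformations of V_α induced by [r,g,μ] and [s,h,β] have the same kernel if and only if row P_μ is proportional to row P_β. In particular, if the representation (V_α; J((X;G);P)) is faithful, then P is right reductive. -/
/-- The action of the monomial matrix (triple) `t = [r, g, λ]` on the vector `a = i_x`
over a ramified matrix `P`:  `[r,g,λ](i_x) = r_{g(P(λ,i)(x))}`. -/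
def ramAct {X G : Type*} [Group G] (φ : G →* Equiv.Perm X) {m n : ℕ}
    (P : Fin m → Fin n → X → X) (t : Fin n × G × Fin m) (a : Fin n × X) : Fin n × X :=
  (t.1, φ t.2.1 (P t.2.2 a.1 a.2))

/-!
Because `α ⊆ θ_P` and `α` is reflexive, the kernel of `[r,g,μ]` on `V_α` is the kernel of the
row map `i_x ↦ P(μ,i)(x)`, once column `r` has a group entry. Row regularity makes both row maps
surjective, so equal kernels give a bijection `σ` of `X` with `P_β = σ ∘ P_μ`. Then
`P(β,i₀) = σ ∘ φ g₁` is bijective, hence a group entry `φ g₃` since `P` is ramified, and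
`σ = φ (g₃ g₁⁻¹)`. Conversely, proportional rows `φ g₀ ∘ P_μ = P_β` make `[r,g₀,μ]` and
`[r,1,β]` act identically, which faithfulness forbids unless `μ = β`.
-/

open Function

theorem Function.exists_equiv_apply_eq_of_eq_iff_eq {V X Y : Type*} {F : V → X} {F' : V → Y}
    (hF : Surjective F) (hF' : Surjective F') (h : ∀ a b, F a = F b ↔ F' a = F' b) :
    ∃ σ : X ≃ Y, ∀ a, σ (F a) = F' a := by
  have hσ : ∀ a, F' (surjInv hF (F a)) = F' a := fun a =>
    (h _ _).1 (surjInv_eq hF (F a))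
  refine ⟨Equiv.ofBijective (F' ∘ surjInv hF) ⟨fun x y hxy => ?_, fun y => ?_⟩, hσ⟩
  · simpa only [surjInv_eq] using (h _ _).2 hxy
  · obtain ⟨a, rfl⟩ := hF' y
    exact ⟨F a, hσ a⟩

namespace RamifiedMatrix

variable {X G : Type*} [Group G] (φ : G →* Equiv.Perm X) {m n : ℕ} (P : Fin m → Fin n → X → X)

theorem rel_ramAct_iff {α : Fin n × X → Fin n × X → Prop} (hrefl : ∀ a, α a a)
    (hαθ : ∀ a b, α a b → ∀ lam, P lam a.1 a.2 = P lam b.1 b.2)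
    {r : Fin n} (hr : ∃ lam g, P lam r = ⇑(φ g)) (g : G) (μ : Fin m) (a b : Fin n × X) :
    α (ramAct φ P (r, g, μ) a) (ramAct φ P (r, g, μ) b) ↔ P μ a.1 a.2 = P μ b.1 b.2 := by
  refine ⟨fun hab => ?_, fun hab => ?_⟩
  · obtain ⟨lam, g', hg'⟩ := hr
    have h := hαθ _ _ hab lam
    simp only [ramAct, hg'] at h
    exact (φ g).injective ((φ g').injective h)
  · simp only [ramAct, hab]
    exact hrefl _

variable {φ P}

theorem surjective_row {μ : Fin m} (hμ : ∃ i g, P μ i = ⇑(φ g)) :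
    Surjective fun a : Fin n × X => P μ a.1 a.2 := by
  obtain ⟨i, g, hg⟩ := hμ
  intro x
  exact ⟨(i, (φ g).symm x), by simp [hg]⟩

theorem proportional_of_eq_iff_eq {μ β : Fin m}
    (hram : ∀ i, (∃ g, P β i = ⇑(φ g)) ∨ ¬ Bijective (P β i))
    (hμ : ∃ i g, P μ i = ⇑(φ g)) (hβ : ∃ i g, P β i = ⇑(φ g))
    (h : ∀ a b : Fin n × X, P μ a.1 a.2 = P μ b.1 b.2 ↔ P β a.1 a.2 = P β b.1 b.2) :
    ∃ g₀ : G, ∀ i, ⇑(φ g₀) ∘ P μ i = P β i := by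
  obtain ⟨σ, hσ⟩ :=
    exists_equiv_apply_eq_of_eq_iff_eq (surjective_row hμ) (surjective_row hβ) h
  have hrow : ∀ i, P β i = σ ∘ P μ i := fun i => funext fun x => (hσ (i, x)).symm
  obtain ⟨i₀, g₁, hg₁⟩ := hμ
  have hbij : Bijective (P β i₀) := by
    rw [hrow, hg₁]
    exact σ.bijective.comp (φ g₁).bijective
  obtain ⟨g₃, hg₃⟩ := (hram i₀).resolve_right (not_not_intro hbij)
  have hσg : ⇑σ = ⇑(φ (g₃ * g₁⁻¹)) := by
    have h₃ : ⇑(φ g₃) = σ ∘ φ g₁ := hg₃.symm.trans (by rw [hrow, hg₁])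
    ext x
    simp [h₃]
  exact ⟨g₃ * g₁⁻¹, fun i => by rw [hrow, hσg]⟩

theorem eq_iff_eq_of_proportional {μ β : Fin m} {g₀ : G} (hg₀ : ∀ i, ⇑(φ g₀) ∘ P μ i = P β i)
    (a b : Fin n × X) : P μ a.1 a.2 = P μ b.1 b.2 ↔ P β a.1 a.2 = P β b.1 b.2 := by
  simp only [← hg₀, comp_apply, (φ g₀).injective.eq_iff]

theorem ramAct_eq_of_proportional {μ β : Fin m} {g₀ : G} (hg₀ : ∀ i, ⇑(φ g₀) ∘ P μ i = P β i)
    (r : Fin n) (g : G) : ramAct φ P (r, g * g₀, μ) = ramAct φ P (r, g, β) := by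
  ext a <;> simp [ramAct, ← hg₀]

end RamifiedMatrix

open RamifiedMatrix

theorem ramified_kernels_and_proportional_rows_general {X G : Type*} [Group G]
    (φ : G →* Equiv.Perm X)
    {m n : ℕ} (P : Fin m → Fin n → X → X)
    (hram : ∀ lam i, (∃ g, P lam i = ⇑(φ g)) ∨ ¬ Function.Bijective (P lam i))
    (hregrow : ∀ lam, ∃ i g, P lam i = ⇑(φ g))
    (hregcol : ∀ i, ∃ lam g, P lam i = ⇑(φ g))
    (α : (Fin n × X) → (Fin n × X) → Prop) (hα : Equivalence α)
    (hαθ : ∀ a b, α a b → ∀ lam, P lam a.1 a.2 = P lam b.1 b.2) :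
    (∀ (r s : Fin n) (g h : G) (μ β : Fin m), μ ≠ β →
      ((∀ a b : Fin n × X,
          (α (ramAct φ P (r, g, μ) a) (ramAct φ P (r, g, μ) b) ↔
            α (ramAct φ P (s, h, β) a) (ramAct φ P (s, h, β) b))) ↔
        ∃ g0 : G, ∀ i, ⇑(φ g0) ∘ P μ i = P β i)) ∧
    ((∀ t t' : Fin n × G × Fin m,
        (∀ a, α (ramAct φ P t a) (ramAct φ P t' a)) → t = t') →
      ∀ μ β : Fin m, (∃ g0 : G, ∀ i, ⇑(φ g0) ∘ P μ i = P β i) → μ = β) := by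
  have hker := fun r => rel_ramAct_iff φ P hα.refl hαθ (hregcol r)
  refine ⟨fun r s g h μ β _ => ?_, fun hfaithful μ β ⟨g₀, hg₀⟩ => ?_⟩
  · simp only [hker r, hker s]
    exact ⟨proportional_of_eq_iff_eq (hram β) (hregrow μ) (hregrow β),
      fun ⟨_, hg₀⟩ => eq_iff_eq_of_proportional hg₀⟩
  · obtain ⟨i, -⟩ := hregrow μ
    have hsame : ramAct φ P (i, g₀, μ) = ramAct φ P (i, 1, β) := by
      simpa only [one_mul] using ramAct_eq_of_proportional hg₀ i 1
    exact congrArg (·.2.2) (hfaithful (i, g₀, μ) (i, 1, β) fun a => hsame ▸ hα.refl _)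

/-- Let `(X;G)` be a faithful group representation, `P` a regular ramified `m×n` matrix
over `(X;G)`, and `α` a deflationary equivalence contained in `θ_P`.  Then for triples
`[r,g,μ]` and `[s,h,β]` with `μ ≠ β`, the induced transformations of `V_α` have the same
kernel iff the rows `P_μ` and `P_β` are proportional.  In particular, if the induced
representation `(V_α; J((X;G);P))` is faithful, then `P` is right reductive. -/
theorem ramified_kernels_and_proportional_rows {X G : Type*} [Fintype X] [Group G]
    [Fintype G] (φ : G →* Equiv.Perm X) (hφ : Function.Injective φ)
    {m n : ℕ} (P : Fin m → Fin n → X → X)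
    (hram : ∀ lam i, (∃ g, P lam i = ⇑(φ g)) ∨ ¬ Function.Bijective (P lam i))
    (hregrow : ∀ lam, ∃ i g, P lam i = ⇑(φ g))
    (hregcol : ∀ i, ∃ lam g, P lam i = ⇑(φ g))
    (α : (Fin n × X) → (Fin n × X) → Prop) (hα : Equivalence α)
    (hdefl : ∀ a b, α a b → ∀ t : Fin n × G × Fin m, ramAct φ P t a = ramAct φ P t b)
    (hαθ : ∀ a b, α a b → ∀ lam, P lam a.1 a.2 = P lam b.1 b.2) :
    (∀ (r s : Fin n) (g h : G) (μ β : Fin m), μ ≠ β →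
      ((∀ a b : Fin n × X,
          (α (ramAct φ P (r, g, μ) a) (ramAct φ P (r, g, μ) b) ↔
            α (ramAct φ P (s, h, β) a) (ramAct φ P (s, h, β) b))) ↔
        ∃ g0 : G, ∀ i, ⇑(φ g0) ∘ P μ i = P β i)) ∧
    ((∀ t t' : Fin n × G × Fin m,
        (∀ a, α (ramAct φ P t a) (ramAct φ P t' a)) → t = t') →
      ∀ μ β : Fin m, (∃ g0 : G, ∀ i, ⇑(φ g0) ∘ P μ i = P β i) → μ = β) :=
  ramified_kernels_and_proportional_rows_general φ P hram hregrow hregcol α hα hαθ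
end

section
/- Let (Y;S) be a primitive representation of a finite semigroup S on a finite set Y with |Y| > 2, let J be the set of minimal functions of (Y;S), and let C be the set of constant functions in γ(S). Then: (1) for any nonconstant s, t ∈ γ(S) there exists u ∈ γ(S) ∪ {id_Y} with s∘u∘t nonconstant; (2) J is a single 𝒥-class of the transformation semigroup γ(S) and this 𝒥-class is regular; (3) every nonconstant element of γ(S) lies 𝒥-above some element of J, and every element strictly 𝒥-below J is constant; (4) the equivalence relation on Y generated by the union of W × W over all minimal sets W is the universal relation; (5) the union of the images j(Y), j ∈ J, is all of Y, and for j, k ∈ J the composite j∘k is either again in J or a constant function. -/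
/-!
The key step is a sandwich lemma: for nonconstant `s, t ∈ T` the relation "`s ∘ w` agrees on
`a` and `b` for every `w ∈ T¹`" is `T`-compatible and neither trivial nor universal unless some
`s ∘ u ∘ t` is nonconstant. Hence the minimal functions are exactly the nonconstant functions of
least rank `|f(Y)|`: for minimal `f` and nonconstant `g`, `f ∘ u ∘ g` has image `f(Y)` and rank at
most that of `g`. Everything else is rank counting. For minimal `f`, `f ∘ u` permutes `f(Y)`, so
a power of it fixes `f(Y)`, which gives regularity and then the 𝒥-equivalence of any two minimal
functions. Finally `T` maps a minimal set onto a minimal set or a point, so the minimal sets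
generate a `T`-compatible equivalence, which must be universal.
-/

section TransformationReps

variable {Y : Type*}

/-- A constant function. -/
def IsConst (f : Y → Y) : Prop := ∃ c, ∀ y, f y = c

/-- `W` is a minimal set of the representation given by the set `T` of transformations:
it is a non-singleton image set which is minimal among non-singleton image sets. -/
def MinSet (T : Set (Y → Y)) (W : Set Y) : Prop :=
  2 ≤ W.ncard ∧ (∃ s ∈ T, Set.range s = W) ∧
    ∀ t ∈ T, 2 ≤ (Set.range t).ncard → Set.range t ⊆ W → Set.range t = W

/-- A minimal function: an element of `T` whose image is a minimal set. -/
def MinFun (T : Set (Y → Y)) (f : Y → Y) : Prop :=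
  f ∈ T ∧ MinSet T (Set.range f)

/-- The representation given by the set `T` of transformations of `Y` is primitive: the
only `T`-compatible equivalence relations on `Y` are the diagonal and the universal one. -/
def PrimitiveRep (T : Set (Y → Y)) : Prop :=
  ∀ θ : Y → Y → Prop, Equivalence θ →
    (∀ a b, θ a b → ∀ f ∈ T, θ (f a) (f b)) →
    (∀ a b, θ a b → a = b) ∨ (∀ a b, θ a b)

/-- The 𝒥-preorder `f ≤_𝒥 g` (i.e. `T¹fT¹ ⊆ T¹gT¹`, i.e. `f ∈ T¹gT¹`) on the
transformation semigroup `T`. -/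
def jBelow (T : Set (Y → Y)) (f g : Y → Y) : Prop :=
  f = g ∨ (∃ u ∈ T, f = u ∘ g) ∨ (∃ v ∈ T, f = g ∘ v) ∨
    ∃ u ∈ T, ∃ v ∈ T, f = u ∘ g ∘ v

end TransformationReps

open Function Set Relation

section TransformationSemigroups

variable {Y : Type*} {T : Set (Y → Y)} {f g j : Y → Y}

def IsCompClosed (T : Set (Y → Y)) : Prop := ∀ f ∈ T, ∀ g ∈ T, f ∘ g ∈ T

def minSetRel (T : Set (Y → Y)) (p q : Y) : Prop := ∃ W, MinSet T W ∧ p ∈ W ∧ q ∈ W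

theorem IsCompClosed.comp_mem_left (hT : IsCompClosed T) {u : Y → Y} (hu : u ∈ T ∨ u = id)
    (hg : g ∈ T) : u ∘ g ∈ T := by
  rcases hu with hu | rfl
  exacts [hT u hu g hg, hg]

theorem IsCompClosed.comp_mem_right (hT : IsCompClosed T) {u : Y → Y} (hg : g ∈ T)
    (hu : u ∈ T ∨ u = id) : g ∘ u ∈ T := by
  rcases hu with hu | rfl
  exacts [hT g hg u hu, hg]

theorem IsCompClosed.iterate_succ_mem (hT : IsCompClosed T) (hf : f ∈ T) :
    ∀ n : ℕ, f^[n + 1] ∈ T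
  | 0 => hf
  | n + 1 => by
    rw [iterate_succ']
    exact hT f hf _ (hT.iterate_succ_mem hf n)

theorem IsConst.of_jBelow (hg : IsConst g) (h : jBelow T f g) : IsConst f := by
  obtain ⟨c, hc⟩ := hg
  rcases h with rfl | ⟨u, -, rfl⟩ | ⟨v, -, rfl⟩ | ⟨u, -, v, -, rfl⟩
  · exact ⟨c, hc⟩
  · exact ⟨u c, fun y => congrArg u (hc y)⟩
  · exact ⟨c, fun y => hc (v y)⟩
  · exact ⟨u c, fun y => congrArg u (hc (v y))⟩

theorem ncard_range_comp_le [Finite Y] (f g : Y → Y) :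
    (range (f ∘ g)).ncard ≤ (range g).ncard := by
  rw [range_comp]
  exact ncard_image_le

theorem ncard_range_le_of_jBelow [Finite Y] (h : jBelow T f g) :
    (range f).ncard ≤ (range g).ncard := by
  have hright : ∀ v : Y → Y, (range (g ∘ v)).ncard ≤ (range g).ncard := fun v =>
    ncard_le_ncard (range_comp_subset_range v g)
  rcases h with rfl | ⟨u, -, rfl⟩ | ⟨v, -, rfl⟩ | ⟨u, -, v, -, rfl⟩
  · exact le_rfl
  · exact ncard_range_comp_le u g
  · exact hright v
  · exact (ncard_range_comp_le u (g ∘ v)).trans (hright v)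

theorem exists_iterate_succ_eqOn_id_of_image_eq [Finite Y] {h : Y → Y} {A : Set Y}
    (hA : h '' A = A) :
    ∃ n, ∀ x ∈ A, h^[n + 1] x = x := by
  obtain ⟨i, j, hij, heq⟩ := Finite.exists_ne_map_eq_of_infinite fun n : ℕ => h^[n]
  wlog hlt : i < j generalizing i j
  · exact this j i hij.symm heq.symm (hij.lt_or_gt.resolve_left hlt)
  refine ⟨j - i - 1, fun x hx => ?_⟩
  obtain ⟨y, -, rfl⟩ : x ∈ h^[i] '' A := (IsFixedPt.image_iterate hA i).symm ▸ hx
  rw [← iterate_add_apply, show j - i - 1 + 1 + i = j by omega, ← heq]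

theorem not_isConst_iff_two_le_ncard_range [Finite Y] [Nonempty Y] :
    ¬ IsConst f ↔ 2 ≤ (range f).ncard := by
  have hconst : IsConst f ↔ (range f).ncard ≤ 1 := by
    rw [ncard_le_one_iff_subset_singleton]
    simp only [IsConst, range_subset_singleton, funext_iff, const_apply]
  rw [hconst]
  omega

theorem MinFun.not_isConst [Finite Y] [Nonempty Y] (hf : MinFun T f) : ¬ IsConst f :=
  not_isConst_iff_two_le_ncard_range.mpr hf.2.1

theorem MinSet.exists_minFun_range_eq {W : Set Y} (hW : MinSet T W) :
    ∃ w, MinFun T w ∧ range w = W := by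
  obtain ⟨w, hw, rfl⟩ := hW.2.1
  exact ⟨w, ⟨hw, hW⟩, rfl⟩

theorem minFun_of_forall_ncard_range_le [Finite Y] [Nonempty Y] (hf : f ∈ T)
    (hfc : ¬ IsConst f) (hmin : ∀ g ∈ T, ¬ IsConst g → (range f).ncard ≤ (range g).ncard) :
    MinFun T f := by
  refine ⟨hf, not_isConst_iff_two_le_ncard_range.mp hfc, ⟨f, hf, rfl⟩, fun t ht ht2 hsub => ?_⟩
  exact eq_of_subset_of_ncard_le hsub (hmin t ht (not_isConst_iff_two_le_ncard_range.mpr ht2))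

theorem exists_minFun [Finite Y] [Nonempty Y] (h : ∃ f ∈ T, ¬ IsConst f) : ∃ f, MinFun T f := by
  obtain ⟨f, ⟨hf, hfc⟩, hmin⟩ :=
    exists_min_image {f | f ∈ T ∧ ¬ IsConst f} (fun f => (range f).ncard) (toFinite _) h
  exact ⟨f, minFun_of_forall_ncard_range_le hf hfc fun g hg hgc => hmin g ⟨hg, hgc⟩⟩

/-- If `T` consists of constants, every equivalence relation is `T`-compatible; the one
with classes `{c}` and `Y \ {c}` is then neither trivial nor universal. -/
theorem PrimitiveRep.exists_not_isConst_mem [Fintype Y] (hprim : PrimitiveRep T)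
    (hY : 2 < Fintype.card Y) : ∃ f ∈ T, ¬ IsConst f := by
  by_contra! hconst
  obtain ⟨a, b, c, hab, hac, hbc⟩ := Fintype.two_lt_card_iff.mp hY
  have hθ : Equivalence fun x y : Y => (x = c ↔ y = c) := ⟨fun _ => Iff.rfl, Iff.symm, Iff.trans⟩
  have hcompat : ∀ x y, (x = c ↔ y = c) → ∀ f ∈ T, (f x = c ↔ f y = c) := by
    intro x y _ f hf
    obtain ⟨d, hd⟩ := hconst f hf
    rw [hd x, hd y]
  rcases hprim _ hθ hcompat with hdiag | huniv
  · exact hab (hdiag a b (iff_of_false hac hbc))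
  · exact hac ((huniv a c).mpr rfl)

theorem PrimitiveRep.exists_not_isConst_comp_comp [Nonempty Y] (hT : IsCompClosed T)
    (hprim : PrimitiveRep T) {s t : Y → Y} (hsc : ¬ IsConst s) (htc : ¬ IsConst t) :
    ∃ u, (u ∈ T ∨ u = id) ∧ ¬ IsConst (s ∘ u ∘ t) := by
  by_contra! hconst
  let θ : Y → Y → Prop := fun a b => ∀ w, (w ∈ T ∨ w = id) → s (w a) = s (w b)
  have hθ : Equivalence θ :=
    ⟨fun _ _ _ => rfl, fun h w hw => (h w hw).symm, fun h₁ h₂ w hw => (h₁ w hw).trans (h₂ w hw)⟩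
  have hcompat : ∀ a b, θ a b → ∀ f ∈ T, θ (f a) (f b) := fun a b h f hf w hw =>
    h (w ∘ f) (Or.inl (hT.comp_mem_left hw hf))
  obtain ⟨y₀⟩ := ‹Nonempty Y›
  rcases hprim θ hθ hcompat with hdiag | huniv
  · refine htc ⟨t y₀, fun y => hdiag _ _ fun w hw => ?_⟩
    obtain ⟨c, hc⟩ := hconst w hw
    exact (hc y).trans (hc y₀).symm
  · exact hsc ⟨s y₀, fun y => huniv y y₀ id (Or.inr rfl)⟩

variable [Finite Y] [Nonempty Y]

theorem MinFun.range_comp_eq (hT : IsCompClosed T) (hf : MinFun T f) {v : Y → Y} (hv : v ∈ T)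
    (hfv : ¬ IsConst (f ∘ v)) : range (f ∘ v) = range f :=
  hf.2.2.2 _ (hT f hf.1 v hv) (not_isConst_iff_two_le_ncard_range.mp hfv)
    (range_comp_subset_range v f)

theorem MinFun.ncard_range_le (hT : IsCompClosed T) (hprim : PrimitiveRep T) (hf : MinFun T f)
    (hg : g ∈ T) (hgc : ¬ IsConst g) : (range f).ncard ≤ (range g).ncard := by
  obtain ⟨u, hu, hfug⟩ := hprim.exists_not_isConst_comp_comp hT hf.not_isConst hgc
  calc (range f).ncard = (range (f ∘ u ∘ g)).ncard := by
        rw [hf.range_comp_eq hT (hT.comp_mem_left hu hg) hfug]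
    _ ≤ (range (u ∘ g)).ncard := ncard_range_comp_le f (u ∘ g)
    _ ≤ (range g).ncard := ncard_range_comp_le u g

theorem MinFun.of_ncard_range_le (hT : IsCompClosed T) (hprim : PrimitiveRep T)
    (hj : MinFun T j) (hf : f ∈ T) (hfc : ¬ IsConst f) (hle : (range f).ncard ≤ (range j).ncard) :
    MinFun T f :=
  minFun_of_forall_ncard_range_le hf hfc fun _ hg hgc =>
    hle.trans (hj.ncard_range_le hT hprim hg hgc)

theorem MinFun.exists_comp_comp_eq_self (hT : IsCompClosed T) (hprim : PrimitiveRep T)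
    (hf : MinFun T f) : ∃ g ∈ T, f ∘ g ∘ f = f := by
  obtain ⟨u, hu, hfuf⟩ := hprim.exists_not_isConst_comp_comp hT hf.not_isConst hf.not_isConst
  have hperm : (f ∘ u) '' range f = range f := by
    rw [← range_comp]
    exact hf.range_comp_eq hT (hT.comp_mem_left hu hf.1) hfuf
  obtain ⟨n, hn⟩ := exists_iterate_succ_eqOn_id_of_image_eq hperm
  refine ⟨u ∘ (f ∘ u)^[2 * n + 1],
    hT.comp_mem_left hu (hT.iterate_succ_mem (hT.comp_mem_right hf.1 hu) _), funext fun x => ?_⟩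
  calc f (u ((f ∘ u)^[2 * n + 1] (f x))) = (f ∘ u)^[2 * n + 1 + 1] (f x) :=
        (iterate_succ_apply' (f ∘ u) _ _).symm
    _ = (f ∘ u)^[n + 1] ((f ∘ u)^[n + 1] (f x)) := by
        rw [← iterate_add_apply, show n + 1 + (n + 1) = 2 * n + 1 + 1 by omega]
    _ = f x := by rw [hn _ (mem_range_self x), hn _ (mem_range_self x)]

/-- `z = f ∘ u ∘ g` is a minimal function with the image of `f`; if `z ∘ q ∘ z = z`, then
`z ∘ q` fixes `range f`, whence `f = (f ∘ u) ∘ g ∘ (q ∘ f)`. -/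
theorem MinFun.jBelow_of_minFun (hT : IsCompClosed T) (hprim : PrimitiveRep T) (hf : MinFun T f)
    (hg : MinFun T g) : jBelow T f g := by
  obtain ⟨u, hu, hfug⟩ := hprim.exists_not_isConst_comp_comp hT hf.not_isConst hg.not_isConst
  have hrange : range (f ∘ u ∘ g) = range f := hf.range_comp_eq hT (hT.comp_mem_left hu hg.1) hfug
  have hz : MinFun T (f ∘ u ∘ g) :=
    hf.of_ncard_range_le hT hprim (hT f hf.1 _ (hT.comp_mem_left hu hg.1)) hfug
      (congrArg ncard hrange).le
  obtain ⟨q, hq, hzqz⟩ := hz.exists_comp_comp_eq_self hT hprim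
  refine Or.inr (Or.inr (Or.inr
    ⟨f ∘ u, hT.comp_mem_right hf.1 hu, q ∘ f, hT q hq f hf.1, funext fun x => ?_⟩))
  obtain ⟨y, hy⟩ : f x ∈ range (f ∘ u ∘ g) := hrange ▸ mem_range_self x
  change f x = (f ∘ u ∘ g) (q (f x))
  rw [← hy]
  exact (congrFun hzqz y).symm

theorem MinFun.of_jBelow_of_jBelow (hT : IsCompClosed T) (hprim : PrimitiveRep T)
    (hf : MinFun T f) (hg : g ∈ T) (hgf : jBelow T g f) (hfg : jBelow T f g) : MinFun T g :=
  hf.of_ncard_range_le hT hprim hg (fun hgc => hf.not_isConst (hgc.of_jBelow hfg))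
    (ncard_range_le_of_jBelow hgf)

theorem MinFun.exists_minFun_jBelow (hT : IsCompClosed T) (hprim : PrimitiveRep T)
    (hj : MinFun T j) (hf : f ∈ T) (hfc : ¬ IsConst f) : ∃ k, MinFun T k ∧ jBelow T k f := by
  obtain ⟨u, hu, hfuj⟩ := hprim.exists_not_isConst_comp_comp hT hfc hj.not_isConst
  have huj : u ∘ j ∈ T := hT.comp_mem_left hu hj.1
  refine ⟨f ∘ u ∘ j, hj.of_ncard_range_le hT hprim (hT f hf _ huj) hfuj ?_,
    Or.inr (Or.inr (Or.inl ⟨u ∘ j, huj, rfl⟩))⟩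
  exact (ncard_range_comp_le f (u ∘ j)).trans (ncard_range_comp_le u j)

theorem MinFun.isConst_of_jBelow_of_not_jBelow (hT : IsCompClosed T) (hprim : PrimitiveRep T)
    (hj : MinFun T j) (hf : f ∈ T) (hfj : jBelow T f j) (hjf : ¬ jBelow T j f) : IsConst f := by
  by_contra hfc
  have hf_min : MinFun T f := hj.of_ncard_range_le hT hprim hf hfc (ncard_range_le_of_jBelow hfj)
  exact hjf (hj.jBelow_of_minFun hT hprim hf_min)

theorem MinFun.comp_minFun_or_isConst (hT : IsCompClosed T) (hprim : PrimitiveRep T)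
    (hf : MinFun T f) (hg : MinFun T g) : MinFun T (f ∘ g) ∨ IsConst (f ∘ g) :=
  or_iff_not_imp_right.mpr fun hc =>
    hg.of_ncard_range_le hT hprim (hT f hf.1 g hg.1) hc (ncard_range_comp_le f g)

theorem minSetRel.map (hT : IsCompClosed T) (hprim : PrimitiveRep T) {p q : Y}
    (hpq : minSetRel T p q) (hf : f ∈ T) : EqvGen (minSetRel T) (f p) (f q) := by
  obtain ⟨W, hW, hp, hq⟩ := hpq
  obtain ⟨w, hw, rfl⟩ := hW.exists_minFun_range_eq
  obtain ⟨x, rfl⟩ := hp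
  obtain ⟨y, rfl⟩ := hq
  by_cases hc : IsConst (f ∘ w)
  · obtain ⟨c, hc⟩ := hc
    rw [show f (w x) = f (w y) from (hc x).trans (hc y).symm]
    exact .refl _
  · exact .rel _ _ ⟨_, (hw.of_ncard_range_le hT hprim (hT f hf w hw.1) hc
      (ncard_range_comp_le f w)).2, mem_range_self x, mem_range_self y⟩

theorem Relation.EqvGen.minSetRel_map (hT : IsCompClosed T) (hprim : PrimitiveRep T) {a b : Y}
    (h : EqvGen (minSetRel T) a b) (hf : f ∈ T) : EqvGen (minSetRel T) (f a) (f b) :=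
  ((EqvGen.is_equivalence _).comap f).eqvGen_iff.mp
    (EqvGen.mono (fun _ _ hpq => hpq.map hT hprim hf) _ _ h)

theorem PrimitiveRep.eqvGen_minSetRel (hT : IsCompClosed T) (hprim : PrimitiveRep T)
    (hJ : ∃ j, MinFun T j) (a b : Y) : EqvGen (minSetRel T) a b := by
  refine ((hprim _ (EqvGen.is_equivalence _) fun _ _ h _ hf => h.minSetRel_map hT hprim hf)
    |>.resolve_left fun hdiag => ?_) a b
  obtain ⟨j, hj⟩ := hJ
  obtain ⟨x, y, hx, hy, hxy⟩ := (one_lt_ncard_iff (toFinite _)).mp hj.2.1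
  exact hxy (hdiag x y (.rel _ _ ⟨_, hj.2, hx, hy⟩))

/-- A point `y` outside all minimal sets would be its own class of the universal relation
`EqvGen (minSetRel T)`. -/
theorem PrimitiveRep.exists_minFun_mem_range [Nontrivial Y] (hT : IsCompClosed T)
    (hprim : PrimitiveRep T) (hJ : ∃ j, MinFun T j) (y : Y) : ∃ j, MinFun T j ∧ y ∈ range j := by
  by_contra! hy
  obtain ⟨b, hb⟩ := exists_ne y
  have hθ : Equivalence fun p q : Y => (p = y ↔ q = y) := ⟨fun _ => Iff.rfl, Iff.symm, Iff.trans⟩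
  have hle : minSetRel T ≤ fun p q => (p = y ↔ q = y) := by
    rintro p q ⟨W, hW, hp, hq⟩
    obtain ⟨w, hw, rfl⟩ := hW.exists_minFun_range_eq
    exact iff_of_false (fun h => hy w hw (h ▸ hp)) (fun h => hy w hw (h ▸ hq))
  exact hb (hθ.eqvGen_iff.mp (EqvGen.mono hle _ _ (hprim.eqvGen_minSetRel hT hJ b y)) |>.mpr rfl)

end TransformationSemigroups

theorem primitive_minimal_functions_structure_general {S Y : Type*} [Semigroup S]
    [Fintype Y] (γ : S → Y → Y) (hγ : ∀ s t : S, γ (s * t) = γ s ∘ γ t)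
    (hcard : 2 < Fintype.card Y)
    (hprim : PrimitiveRep (Set.range γ)) :
    (∀ s ∈ Set.range γ, ∀ t ∈ Set.range γ, ¬ IsConst s → ¬ IsConst t →
      ∃ u : Y → Y, (u ∈ Set.range γ ∨ u = id) ∧ ¬ IsConst (s ∘ u ∘ t)) ∧
    ((∃ f, MinFun (Set.range γ) f) ∧
      (∀ f g : Y → Y, MinFun (Set.range γ) f → MinFun (Set.range γ) g →
        jBelow (Set.range γ) f g) ∧
      (∀ f g : Y → Y, MinFun (Set.range γ) f → g ∈ Set.range γ →
        jBelow (Set.range γ) g f → jBelow (Set.range γ) f g →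
          MinFun (Set.range γ) g) ∧
      (∀ f : Y → Y, MinFun (Set.range γ) f →
        ∃ g ∈ Set.range γ, f ∘ g ∘ f = f)) ∧
    ((∀ f ∈ Set.range γ, ¬ IsConst f →
        ∃ j : Y → Y, MinFun (Set.range γ) j ∧ jBelow (Set.range γ) j f) ∧
      (∀ f ∈ Set.range γ, ∀ j : Y → Y, MinFun (Set.range γ) j →
        jBelow (Set.range γ) f j → ¬ jBelow (Set.range γ) j f → IsConst f)) ∧
    (∀ a b : Y, Relation.EqvGen
      (fun p q => ∃ W : Set Y, MinSet (Set.range γ) W ∧ p ∈ W ∧ q ∈ W) a b) ∧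
    ((∀ y : Y, ∃ j : Y → Y, MinFun (Set.range γ) j ∧ y ∈ Set.range j) ∧
      (∀ j k : Y → Y, MinFun (Set.range γ) j → MinFun (Set.range γ) k →
        MinFun (Set.range γ) (j ∘ k) ∨ IsConst (j ∘ k))) := by
  have hT : IsCompClosed (range γ) := by
    rintro _ ⟨s, rfl⟩ _ ⟨t, rfl⟩
    exact ⟨s * t, hγ s t⟩
  have : Nontrivial Y := Fintype.one_lt_card_iff_nontrivial.mp (by omega)
  obtain ⟨j₀, hj₀⟩ := exists_minFun (hprim.exists_not_isConst_mem hcard)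
  refine ⟨fun s _ t _ => hprim.exists_not_isConst_comp_comp hT,
    ⟨⟨j₀, hj₀⟩, fun _ _ hf => hf.jBelow_of_minFun hT hprim,
      fun _ _ hf => hf.of_jBelow_of_jBelow hT hprim,
      fun _ hf => hf.exists_comp_comp_eq_self hT hprim⟩,
    ⟨fun _ hf => hj₀.exists_minFun_jBelow hT hprim hf,
      fun _ hf _ hj => hj.isConst_of_jBelow_of_not_jBelow hT hprim hf⟩,
    hprim.eqvGen_minSetRel hT ⟨j₀, hj₀⟩,
    hprim.exists_minFun_mem_range hT ⟨j₀, hj₀⟩,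
    fun _ _ hj => hj.comp_minFun_or_isConst hT hprim⟩

/-- Basic structure of a primitive representation `(Y;S)` with `|Y| > 2`, where `J` is the
set of minimal functions of `(Y;S)`:
(1) for nonconstant `s, t ∈ γ(S)` there is `u ∈ γ(S) ∪ {id}` with `s∘u∘t` nonconstant;
(2) `J` is a single 𝒥-class of the transformation semigroup `γ(S)`, and it is regular;
(3) every nonconstant element of `γ(S)` is 𝒥-above some element of `J`, and every element
    strictly 𝒥-below `J` is constant;
(4) the equivalence relation on `Y` generated by the union of `W × W` over all minimal
    sets `W` is the universal relation;
(5) the images of the minimal functions cover `Y`, and the composite of two minimal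
    functions is a minimal function or a constant. -/
theorem primitive_minimal_functions_structure {S Y : Type*} [Semigroup S] [Fintype S]
    [Fintype Y] (γ : S → Y → Y) (hγ : ∀ s t : S, γ (s * t) = γ s ∘ γ t)
    (hcard : 2 < Fintype.card Y)
    (hprim : PrimitiveRep (Set.range γ)) :
    (∀ s ∈ Set.range γ, ∀ t ∈ Set.range γ, ¬ IsConst s → ¬ IsConst t →
      ∃ u : Y → Y, (u ∈ Set.range γ ∨ u = id) ∧ ¬ IsConst (s ∘ u ∘ t)) ∧
    ((∃ f, MinFun (Set.range γ) f) ∧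
      (∀ f g : Y → Y, MinFun (Set.range γ) f → MinFun (Set.range γ) g →
        jBelow (Set.range γ) f g) ∧
      (∀ f g : Y → Y, MinFun (Set.range γ) f → g ∈ Set.range γ →
        jBelow (Set.range γ) g f → jBelow (Set.range γ) f g →
          MinFun (Set.range γ) g) ∧
      (∀ f : Y → Y, MinFun (Set.range γ) f →
        ∃ g ∈ Set.range γ, f ∘ g ∘ f = f)) ∧
    ((∀ f ∈ Set.range γ, ¬ IsConst f →
        ∃ j : Y → Y, MinFun (Set.range γ) j ∧ jBelow (Set.range γ) j f) ∧
      (∀ f ∈ Set.range γ, ∀ j : Y → Y, MinFun (Set.range γ) j →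
        jBelow (Set.range γ) f j → ¬ jBelow (Set.range γ) j f → IsConst f)) ∧
    (∀ a b : Y, Relation.EqvGen
      (fun p q => ∃ W : Set Y, MinSet (Set.range γ) W ∧ p ∈ W ∧ q ∈ W) a b) ∧
    ((∀ y : Y, ∃ j : Y → Y, MinFun (Set.range γ) j ∧ y ∈ Set.range j) ∧
      (∀ j k : Y → Y, MinFun (Set.range γ) j → MinFun (Set.range γ) k →
        MinFun (Set.range γ) (j ∘ k) ∨ IsConst (j ∘ k))) :=
  primitive_minimal_functions_structure_general γ hγ hcard hprim
end

section
/- Let (Y;S) be a primitive representation of a finite semigroup on a finite set Y with |Y| > 2 and let J be its set of minimal functions. Then for every pair of distinct elements a, b ∈ Y there exists an idempotent e ∈ J with e(a) ≠ e(b). In particular, the only equivalence θ on Y such that j(a') = j(b') for all (a',b') ∈ θ and all j ∈ J is the diagonal. -/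
open Set Function

section

variable {Y : Type*}

lemma two_le_ncard_range_of_apply_ne [Finite Y] {f : Y → Y} {x y : Y} (h : f x ≠ f y) :
    2 ≤ (range f).ncard :=
  (one_lt_ncard_iff).mpr ⟨f x, f y, mem_range_self x, mem_range_self y, h⟩

lemma iterate_mem_of_comp_mem {T : Set (Y → Y)} (hT : ∀ f ∈ T, ∀ g ∈ T, f ∘ g ∈ T)
    {p : Y → Y} (hp : p ∈ T) {n : ℕ} (hn : 0 < n) : p^[n] ∈ T := by
  induction n, hn using Nat.le_induction with
  | base => exact hp
  | succ n _ ih => rw [iterate_succ']; exact hT p hp _ ih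

lemma Set.BijOn.exists_iterate_eqOn_id [Finite Y] {p : Y → Y} {U : Set Y} (h : BijOn p U U) :
    ∃ n, 0 < n ∧ EqOn p^[n] id U := by
  have := Fintype.ofFinite U
  refine ⟨Nat.factorial (Fintype.card U), Nat.factorial_pos _, fun x hx => ?_⟩
  have hid := injective_iff_iterate_factorial_card_eq_id.mp h.bijective.injective
  rw [← h.mapsTo.coe_iterate_restrict ⟨x, hx⟩, hid]
  rfl

lemma exists_iterate_idempotent_of_image_range [Finite Y] {p : Y → Y}
    (h : p '' range p = range p) :
    ∃ n, 0 < n ∧ p^[n] ∘ p^[n] = p^[n] ∧ range p^[n] = range p ∧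
      ∀ a b, p a ≠ p b → p^[n] a ≠ p^[n] b := by
  have hbij : BijOn p (range p) (range p) :=
    (toFinite _).surjOn_iff_bijOn_of_mapsTo (fun _ _ => mem_range_self _) |>.mp h.symm.subset
  obtain ⟨n, hn, hfix⟩ := hbij.exists_iterate_eqOn_id
  have hrange : range p^[n] = range p := by
    refine (range_subset_iff.mpr fun y => ?_).antisymm fun x hx => ⟨x, hfix hx⟩
    obtain ⟨k, rfl⟩ := Nat.exists_eq_add_of_lt hn
    rw [iterate_succ_apply']
    exact mem_range_self _
  refine ⟨n, hn, funext fun y => hfix (hrange ▸ mem_range_self y), hrange,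
    fun a b hab heq => hab ?_⟩
  -- `p^[n]` fixes `range p` and commutes with `p`
  calc p a = p^[n] (p a) := (hfix (mem_range_self a)).symm
    _ = p (p^[n] a) := by rw [← iterate_succ_apply, iterate_succ_apply']
    _ = p (p^[n] b) := by rw [heq]
    _ = p^[n] (p b) := by rw [← iterate_succ_apply' p, iterate_succ_apply]
    _ = p b := hfix (mem_range_self b)

lemma image_range_comp_of_range_comp_comp {s t : Y → Y} (h : range (t ∘ s ∘ t) = range t) :
    (s ∘ t) '' range (s ∘ t) = range (s ∘ t) := by
  simp only [range_comp, image_comp] at h ⊢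
  rw [h]

def IsLeastRank (T : Set (Y → Y)) (t : Y → Y) : Prop :=
  t ∈ T ∧ 2 ≤ (range t).ncard ∧ ∀ u ∈ T, 2 ≤ (range u).ncard → (range t).ncard ≤ (range u).ncard

namespace IsLeastRank

variable {T : Set (Y → Y)} {t u : Y → Y}

lemma of_ncard_range_le (ht : IsLeastRank T t) (hu : u ∈ T) (h2 : 2 ≤ (range u).ncard)
    (hle : (range u).ncard ≤ (range t).ncard) : IsLeastRank T u :=
  ⟨hu, h2, fun v hv hv2 => hle.trans (ht.2.2 v hv hv2)⟩

lemma range_eq_of_subset [Finite Y] (ht : IsLeastRank T t) (hu : u ∈ T)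
    (h2 : 2 ≤ (range u).ncard) (hsub : range u ⊆ range t) : range u = range t :=
  eq_of_subset_of_ncard_le hsub (ht.2.2 u hu h2)

lemma minFun [Finite Y] (ht : IsLeastRank T t) : MinFun T t :=
  ⟨ht.1, ht.2.1, ⟨t, ht.1, rfl⟩, fun _ hu h2 hsub => ht.range_eq_of_subset hu h2 hsub⟩

end IsLeastRank

lemma exists_isLeastRank [Finite Y] {T : Set (Y → Y)} (h : ∃ f ∈ T, ∃ x y, f x ≠ f y) :
    ∃ t, IsLeastRank T t := by
  obtain ⟨f, hf, x, y, hxy⟩ := h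
  obtain ⟨t, ⟨ht, ht2⟩, hmin⟩ := exists_min_image {u ∈ T | 2 ≤ (range u).ncard}
    (fun u => (range u).ncard) (toFinite _) ⟨f, hf, two_le_ncard_range_of_apply_ne hxy⟩
  exact ⟨t, ht, ht2, fun u hu hu2 => hmin u ⟨hu, hu2⟩⟩

namespace PrimitiveRep

variable {T : Set (Y → Y)}

lemma exists_apply_ne (hprim : PrimitiveRep T) {Z : Type*} {F : Set (Y → Z)}
    (hF : ∀ f ∈ F, ∀ g ∈ T, f ∘ g ∈ F ∨ ∀ x y, f (g x) = f (g y))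
    (hne : ∃ f ∈ F, ∃ x y, f x ≠ f y) {a b : Y} (hab : a ≠ b) : ∃ f ∈ F, f a ≠ f b := by
  by_contra! h
  have hequiv : Equivalence fun x y => ∀ f ∈ F, f x = f y :=
    ⟨fun _ _ _ => rfl, fun h f hf => (h f hf).symm, fun h h' f hf => (h f hf).trans (h' f hf)⟩
  have hcompat : ∀ x y, (∀ f ∈ F, f x = f y) → ∀ g ∈ T, ∀ f ∈ F, f (g x) = f (g y) := by
    intro x y hxy g hg f hf
    rcases hF f hf g hg with hfg | hconst
    · exact hxy _ hfg
    · exact hconst x y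
  rcases hprim _ hequiv hcompat with hdiag | huniv
  · exact hab (hdiag a b h)
  · obtain ⟨f, hf, x, y, hxy⟩ := hne
    exact hxy (huniv x y f hf)

lemma exists_apply_ne_of_two_lt_card [Finite Y] (hprim : PrimitiveRep T)
    (hcard : 2 < Nat.card Y) :
    ∃ f ∈ T, ∃ x y, f x ≠ f y := by
  classical
  have := Fintype.ofFinite Y
  rw [Nat.card_eq_fintype_card] at hcard
  by_contra! hconst
  obtain ⟨a, b, c, hab, hac, hbc⟩ := Fintype.two_lt_card_iff.mp hcard
  -- every equivalence is compatible with constant maps, e.g. the one collapsing `a` and `b`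
  let collapse : Y → Y := fun x => if x = b then a else x
  obtain ⟨_, rfl, hsep⟩ := hprim.exists_apply_ne (F := {collapse})
    (fun _ _ g hg => Or.inr fun x y => congrArg _ (hconst g hg x y))
    ⟨collapse, rfl, a, c, by simp [collapse, hbc.symm, hac]⟩ hab
  simp [collapse] at hsep

lemma exists_isLeastRank_apply_ne [Finite Y] (hT : ∀ f ∈ T, ∀ g ∈ T, f ∘ g ∈ T)
    (hprim : PrimitiveRep T) (hleast : ∃ t, IsLeastRank T t) {a b : Y} (hab : a ≠ b) :
    ∃ t, IsLeastRank T t ∧ t a ≠ t b := by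
  refine hprim.exists_apply_ne (F := {t | IsLeastRank T t}) (fun f hf g hg => ?_) ?_ hab
  · by_cases h2 : 2 ≤ (range (f ∘ g)).ncard
    · exact Or.inl (hf.of_ncard_range_le (hT f hf.1 g hg) h2
        (ncard_le_ncard (range_comp_subset_range g f)))
    · exact Or.inr fun x y => by_contra fun hxy => h2 (two_le_ncard_range_of_apply_ne hxy)
  · obtain ⟨t, ht⟩ := hleast
    obtain ⟨_, _, ⟨x, rfl⟩, ⟨y, rfl⟩, hxy⟩ := (one_lt_ncard_iff).mp ht.2.1
    exact ⟨t, ht, x, y, hxy⟩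

lemma exists_comp_apply_ne (hT : ∀ f ∈ T, ∀ g ∈ T, f ∘ g ∈ T) (hprim : PrimitiveRep T)
    {t : Y → Y} (ht : ∃ x y, t x ≠ t y) {a b : Y} (hab : a ≠ b) :
    ∃ s ∈ insert id T, t (s a) ≠ t (s b) := by
  have hF : ∀ f ∈ (t ∘ ·) '' insert id T, ∀ g ∈ T, f ∘ g ∈ (t ∘ ·) '' insert id T := by
    rintro _ ⟨s, hs | hs, rfl⟩ g hg
    · exact ⟨g, mem_insert_of_mem _ hg, by rw [hs]; rfl⟩
    · exact ⟨s ∘ g, mem_insert_of_mem _ (hT s hs g hg), rfl⟩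
  obtain ⟨_, ⟨s, hs, rfl⟩, hsep⟩ :=
    hprim.exists_apply_ne (fun f hf g hg => Or.inl (hF f hf g hg))
      ⟨t, ⟨id, mem_insert _ _, rfl⟩, ht⟩ hab
  exact ⟨s, hs, hsep⟩

lemma exists_idempotent_minFun_apply_ne [Finite Y] (hT : ∀ f ∈ T, ∀ g ∈ T, f ∘ g ∈ T)
    (hprim : PrimitiveRep T) (hcard : 2 < Nat.card Y) {a b : Y} (hab : a ≠ b) :
    ∃ e, MinFun T e ∧ e ∘ e = e ∧ e a ≠ e b := by
  obtain ⟨t, ht, htab⟩ := hprim.exists_isLeastRank_apply_ne hT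
    (exists_isLeastRank (hprim.exists_apply_ne_of_two_lt_card hcard)) hab
  obtain ⟨s, hs, hsep⟩ := hprim.exists_comp_apply_ne hT ⟨a, b, htab⟩ htab
  have hp : s ∘ t ∈ T := by
    rcases hs with rfl | hs
    · exact ht.1
    · exact hT s hs t ht.1
  have hrange : range (t ∘ s ∘ t) = range t :=
    ht.range_eq_of_subset (hT t ht.1 _ hp) (two_le_ncard_range_of_apply_ne hsep)
      (range_comp_subset_range _ _)
  have hp_least : IsLeastRank T (s ∘ t) :=
    ht.of_ncard_range_le hp (two_le_ncard_range_of_apply_ne fun h => hsep (congrArg t h))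
      (range_comp s t ▸ ncard_image_le (toFinite _))
  obtain ⟨n, hn, hidem, hrange_iter, hsep_iter⟩ :=
    exists_iterate_idempotent_of_image_range (image_range_comp_of_range_comp_comp hrange)
  have he : IsLeastRank T (s ∘ t)^[n] :=
    ⟨iterate_mem_of_comp_mem hT hp hn, hrange_iter ▸ hp_least.2.1, hrange_iter ▸ hp_least.2.2⟩
  exact ⟨_, he.minFun, hidem, hsep_iter a b fun h => hsep (congrArg t h)⟩

end PrimitiveRep

end

theorem primitive_minimal_functions_separate_general {S Y : Type*} [Semigroup S]
    [Fintype Y] (γ : S → Y → Y) (hγ : ∀ s t : S, γ (s * t) = γ s ∘ γ t)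
    (hcard : 2 < Fintype.card Y)
    (hprim : PrimitiveRep (Set.range γ)) :
    (∀ a b : Y, a ≠ b →
      ∃ e : Y → Y, MinFun (Set.range γ) e ∧ e ∘ e = e ∧ e a ≠ e b) ∧
    (∀ θ : Y → Y → Prop, Equivalence θ →
      (∀ a b, θ a b → ∀ j : Y → Y, MinFun (Set.range γ) j → j a = j b) →
      ∀ a b, θ a b → a = b) := by
  have hT : ∀ f ∈ range γ, ∀ g ∈ range γ, f ∘ g ∈ range γ := by
    rintro _ ⟨σ, rfl⟩ _ ⟨τ, rfl⟩
    exact ⟨σ * τ, hγ σ τ⟩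
  have hsep : ∀ a b : Y, a ≠ b → ∃ e, MinFun (range γ) e ∧ e ∘ e = e ∧ e a ≠ e b :=
    fun a b hab => hprim.exists_idempotent_minFun_apply_ne hT
      (Nat.card_eq_fintype_card (α := Y) ▸ hcard) hab
  refine ⟨hsep, fun θ _ hθ a b hab => by_contra fun hne => ?_⟩
  obtain ⟨e, he, -, hea⟩ := hsep a b hne
  exact hea (hθ a b hab e he)

/-- Let `(Y;S)` be a primitive representation with `|Y| > 2` and let `J` be its set of
minimal functions.  Then for distinct `a, b ∈ Y` there is an idempotent `e ∈ J` with
`e(a) ≠ e(b)`; in particular the only equivalence relation `θ` on `Y` such that every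
element of `J` identifies every `θ`-pair is the diagonal (the representation `(Y;J)` is
reduced). -/
theorem primitive_minimal_functions_separate {S Y : Type*} [Semigroup S] [Fintype S]
    [Fintype Y] (γ : S → Y → Y) (hγ : ∀ s t : S, γ (s * t) = γ s ∘ γ t)
    (hcard : 2 < Fintype.card Y)
    (hprim : PrimitiveRep (Set.range γ)) :
    (∀ a b : Y, a ≠ b →
      ∃ e : Y → Y, MinFun (Set.range γ) e ∧ e ∘ e = e ∧ e a ≠ e b) ∧
    (∀ θ : Y → Y → Prop, Equivalence θ →
      (∀ a b, θ a b → ∀ j : Y → Y, MinFun (Set.range γ) j → j a = j b) →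
      ∀ a b, θ a b → a = b) :=
  primitive_minimal_functions_separate_general γ hγ hcard hprim
end

section
/- Let (Y;S) be a primitive representation of a finite semigroup on a finite set Y with |Y| > 2, let J be its set of minimal functions, let e ∈ J be idempotent, and let G = eJe ∩ J (a group of transformations mapping e(Y) to itself). Then the group representation of G on e(Y) by restriction is primitive. In particular, if a ≠ b are both contained in e(Y), then the smallest S-compatible equivalence Cg(a,b) on Y contains all pairs in e(Y) × e(Y). -/
section TransformationReps

variable {Y : Type*}

/-- The group `eJe ∩ J` of transformations attached to an idempotent minimal function `e`:
transformations of the form `e∘j∘e` with `j ∈ J` which are again minimal functions. -/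
def eJeGroup (T : Set (Y → Y)) (e : Y → Y) : Set (Y → Y) :=
  {g | (∃ j : Y → Y, MinFun T j ∧ g = e ∘ j ∘ e) ∧ MinFun T g}

end TransformationReps

/-- Let `(Y;S)` be a primitive representation with `|Y| > 2`, `e` an idempotent minimal
function, and `G = eJe ∩ J`.  Then the group representation of `G` on `e(Y)` is primitive:
every `G`-compatible equivalence relation on `e(Y)` is the diagonal or the universal
relation on `e(Y)`.  In particular, for distinct `a, b ∈ e(Y)`, the smallest
`S`-compatible equivalence `Cg(a,b)` on `Y` contains all pairs in `e(Y) × e(Y)`. -/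
theorem primitive_on_minimal_neighborhood {S Y : Type*} [Semigroup S] [Fintype S]
    [Fintype Y] (γ : S → Y → Y) (hγ : ∀ s t : S, γ (s * t) = γ s ∘ γ t)
    (hcard : 2 < Fintype.card Y)
    (hprim : PrimitiveRep (Set.range γ))
    (e : Y → Y) (he : MinFun (Set.range γ) e) (hee : e ∘ e = e) :
    (∀ θ : Y → Y → Prop,
      (∀ a ∈ Set.range e, θ a a) →
      (∀ a ∈ Set.range e, ∀ b ∈ Set.range e, θ a b → θ b a) →
      (∀ a ∈ Set.range e, ∀ b ∈ Set.range e, ∀ c ∈ Set.range e,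
        θ a b → θ b c → θ a c) →
      (∀ a ∈ Set.range e, ∀ b ∈ Set.range e, θ a b →
        ∀ g ∈ eJeGroup (Set.range γ) e, θ (g a) (g b)) →
      (∀ a ∈ Set.range e, ∀ b ∈ Set.range e, θ a b → a = b) ∨
        (∀ a ∈ Set.range e, ∀ b ∈ Set.range e, θ a b)) ∧
    (∀ a ∈ Set.range e, ∀ b ∈ Set.range e, a ≠ b →
      ∀ c ∈ Set.range e, ∀ d ∈ Set.range e,
        ∀ θ : Y → Y → Prop, Equivalence θ →
          (∀ x y, θ x y → ∀ s : S, θ (γ s x) (γ s y)) → θ a b → θ c d) := by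

  classical
  obtain ⟨heT, hE2, -, hmin⟩ := he
  have hT : ∀ f g : Y → Y, f ∈ Set.range γ → g ∈ Set.range γ → f ∘ g ∈ Set.range γ := by
    rintro _ _ ⟨s, rfl⟩ ⟨t, rfl⟩
    exact ⟨s * t, hγ s t⟩
  have h1 : ∀ x, e (e x) = e x := fun x => congrFun hee x
  constructor
  · intro θ hrefl hsymm htrans hcompat
    by_cases hd : ∀ a ∈ Set.range e, ∀ b ∈ Set.range e, θ a b → a = b
    · exact Or.inl hd
    right
    push_neg at hd
    obtain ⟨a, ha, b, hb, hab, hne⟩ := hd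
    set R : Y → Y → Prop := fun x y => ∃ u ∈ Set.range e, ∃ v ∈ Set.range e, θ u v ∧
      ((x = u ∧ y = v) ∨ ∃ f ∈ Set.range γ, x = f u ∧ y = f v) with hR
    have hcomp : ∀ x y, Relation.EqvGen R x y → ∀ g ∈ Set.range γ, Relation.EqvGen R (g x) (g y) := by
      intro x y h
      induction h with
      | rel x y hxy =>
        intro g hg
        obtain ⟨u, hu, v, hv, huv, hcase⟩ := hxy
        apply Relation.EqvGen.rel
        rcases hcase with ⟨rfl, rfl⟩ | ⟨f, hf, rfl, rfl⟩
        · exact ⟨_, hu, _, hv, huv, Or.inr ⟨g, hg, rfl, rfl⟩⟩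
        · exact ⟨_, hu, _, hv, huv, Or.inr ⟨g ∘ f, hT g f hg hf, rfl, rfl⟩⟩
      | refl x => intro g hg; exact Relation.EqvGen.refl _
      | symm x y _ ih => intro g hg; exact Relation.EqvGen.symm _ _ (ih g hg)
      | trans x y z _ _ ih1 ih2 => intro g hg; exact Relation.EqvGen.trans _ _ _ (ih1 g hg) (ih2 g hg)
    have huniv : ∀ x y, Relation.EqvGen R x y := by
      rcases hprim (Relation.EqvGen R) (Relation.EqvGen.is_equivalence R) hcomp with h | h
      · exact absurd (h a b (Relation.EqvGen.rel a b ⟨a, ha, b, hb, hab, Or.inl ⟨rfl, rfl⟩⟩)) hne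
      · exact h
    have key : ∀ x y, Relation.EqvGen R x y → θ (e x) (e y) := by
      intro x y h
      induction h with
      | rel x y hxy =>
        obtain ⟨u, hu, v, hv, huv, hcase⟩ := hxy
        have hue : e u = u := by obtain ⟨w, rfl⟩ := hu; exact h1 w
        have hve : e v = v := by obtain ⟨w, rfl⟩ := hv; exact h1 w
        rcases hcase with ⟨rfl, rfl⟩ | ⟨f, hf, rfl, rfl⟩
        · rw [hue, hve]; exact huv
        · set g : Y → Y := e ∘ f ∘ e with hg
          have hgT : g ∈ Set.range γ := hT e (f ∘ e) heT (hT f e hf heT)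
          have hvalU : e (f u) = g u := by simp only [hg, Function.comp_apply, hue]
          have hvalV : e (f v) = g v := by simp only [hg, Function.comp_apply, hve]
          have hsub : Set.range g ⊆ Set.range e := by
            rintro _ ⟨w, rfl⟩; exact ⟨f (e w), rfl⟩
          by_cases h2 : 2 ≤ (Set.range g).ncard
          · have hrange : Set.range g = Set.range e := hmin g hgT h2 hsub
            have hgmin : MinFun (Set.range γ) g := by
              refine ⟨hgT, ?_, ⟨g, hgT, rfl⟩, ?_⟩
              · rw [hrange]; exact hE2
              · intro t ht h2t hsubt
                rw [hrange] at hsubt ⊢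
                exact hmin t ht h2t hsubt
            have hcirc : g = e ∘ g ∘ e := by
              funext x
              show g x = e (g (e x))
              simp only [hg, Function.comp_apply, h1]
            have hgG : g ∈ eJeGroup (Set.range γ) e := ⟨⟨g, hgmin, hcirc⟩, hgmin⟩
            rw [hvalU, hvalV]
            exact hcompat u hu v hv huv g hgG
          · have hle : (Set.range g).ncard ≤ 1 := by omega
            have hss : (Set.range g).Subsingleton :=
              (Set.ncard_le_one_iff_eq (Set.toFinite _)).mp hle |>.elim
                (fun h => by rw [h]; exact Set.subsingleton_empty)
                (fun ⟨x, h⟩ => by rw [h]; exact Set.subsingleton_singleton)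
            have : g u = g v := hss ⟨u, rfl⟩ ⟨v, rfl⟩
            rw [hvalU, hvalV, this]
            exact hrefl _ (hsub ⟨v, rfl⟩)
      | refl x => exact hrefl (e x) ⟨x, rfl⟩
      | symm x y _ ih => exact hsymm _ ⟨x, rfl⟩ _ ⟨y, rfl⟩ ih
      | trans x y z _ _ ih1 ih2 => exact htrans _ ⟨x, rfl⟩ _ ⟨y, rfl⟩ _ ⟨z, rfl⟩ ih1 ih2
    intro c hc d hd'
    have hk := key c d (huniv c d)
    have hce : e c = c := by obtain ⟨w, rfl⟩ := hc; exact h1 w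
    have hde : e d = d := by obtain ⟨w, rfl⟩ := hd'; exact h1 w
    rwa [hce, hde] at hk
  · intro a ha b hb hne c hc d hd θ hθ hcompat hab
    have hcomp' : ∀ x y, θ x y → ∀ f ∈ Set.range γ, θ (f x) (f y) := by
      rintro x y h _ ⟨s, rfl⟩; exact hcompat x y h s
    rcases hprim θ hθ hcomp' with h | h
    · exact absurd (h a b hab) hne
    · exact h c d
end

section
/- If (Y;S) is a faithful primitive representation of a finite semigroup on a finite set Y with |Y| > 2 and J is the set of minimal functions of (Y;S), then the representation (Y;J) (the action of J on Y) is faithful and primitive, and it is a c-representation: for j, k ∈ J, the composite j∘k is either in J or a constant function. -/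
section CompatibleRelations

variable {Y : Type*}

def IsCompatible (T : Set (Y → Y)) (θ : Y → Y → Prop) : Prop :=
  ∀ a b, θ a b → ∀ f ∈ T, θ (f a) (f b)

def IsPrimitive (T : Set (Y → Y)) : Prop :=
  ∀ θ : Y → Y → Prop, Equivalence θ → IsCompatible T θ →
    (∀ a b, θ a b → a = b) ∨ ∀ a b, θ a b

def IsMinRank (T : Set (Y → Y)) (f : Y → Y) : Prop :=
  f ∈ T ∧ 2 ≤ (Set.range f).ncard ∧
    ∀ g ∈ T, 2 ≤ (Set.range g).ncard → (Set.range f).ncard ≤ (Set.range g).ncard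

variable {T : Set (Y → Y)}

lemma two_le_ncard_range_iff [Finite Y] {f : Y → Y} :
    2 ≤ (Set.range f).ncard ↔ ∃ x y, f x ≠ f y :=
  (Set.one_lt_ncard (Set.toFinite _)).trans (by simp)

lemma isConst_of_not_two_le_ncard_range [Finite Y] [Nonempty Y] {f : Y → Y}
    (h : ¬ 2 ≤ (Set.range f).ncard) : IsConst f := by
  rw [two_le_ncard_range_iff] at h
  push Not at h
  exact ⟨f (Classical.arbitrary Y), fun y => h y _⟩

lemma MinFun.comp_or_isConst [Finite Y] [Nonempty Y] {f g : Y → Y} (hf : MinFun T f)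
    (hfg : f ∘ g ∈ T) : MinFun T (f ∘ g) ∨ IsConst (f ∘ g) := by
  by_cases h2 : 2 ≤ (Set.range (f ∘ g)).ncard
  · have hrange : Set.range (f ∘ g) = Set.range f :=
      hf.2.2.2 _ hfg h2 (Set.range_comp_subset_range g f)
    exact Or.inl ⟨hfg, hrange ▸ hf.2⟩
  · exact Or.inr (isConst_of_not_two_le_ncard_range h2)

lemma IsMinRank.minFun [Finite Y] {f : Y → Y} (hf : IsMinRank T f) : MinFun T f :=
  ⟨hf.1, hf.2.1, ⟨f, hf.1, rfl⟩, fun g hg hg2 hsub =>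
    Set.eq_of_subset_of_ncard_le hsub (hf.2.2 g hg hg2)⟩

lemma IsMinRank.comp [Finite Y] {f g : Y → Y} (hf : IsMinRank T f) (hgf : g ∘ f ∈ T)
    (h2 : 2 ≤ (Set.range (g ∘ f)).ncard) : IsMinRank T (g ∘ f) := by
  have hle : (Set.range (g ∘ f)).ncard ≤ (Set.range f).ncard := by
    rw [Set.range_comp]
    exact Set.ncard_image_le
  exact ⟨hgf, h2, fun h hh hh2 => hle.trans (hf.2.2 h hh hh2)⟩

lemma exists_isMinRank [Finite Y] (h : ∃ f ∈ T, 2 ≤ (Set.range f).ncard) :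
    ∃ f, IsMinRank T f := by
  obtain ⟨f, ⟨hfT, hf2⟩, hmin⟩ := Set.exists_min_image {f ∈ T | 2 ≤ (Set.range f).ncard}
    (fun f => (Set.range f).ncard) (Set.toFinite _) h
  exact ⟨f, hfT, hf2, fun g hg hg2 => hmin g ⟨hg, hg2⟩⟩

lemma IsPrimitive.exists_two_le_ncard_range [Fintype Y] (hT : IsPrimitive T)
    (hY : 2 < Fintype.card Y) : ∃ f ∈ T, 2 ≤ (Set.range f).ncard := by
  by_contra hex
  have hconst : ∀ f ∈ T, ∀ x y, f x = f y := fun f hf x y =>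
    by_contra fun hxy => hex ⟨f, hf, two_le_ncard_range_iff.2 ⟨x, y, hxy⟩⟩
  obtain ⟨a, b, c, hab, hac, hbc⟩ := Fintype.two_lt_card_iff.1 hY
  let θ : Y → Y → Prop := fun x y => (x = a ∨ x = b) ↔ (y = a ∨ y = b)
  have hθ : Equivalence θ := ⟨fun _ => Iff.rfl, Iff.symm, Iff.trans⟩
  rcases hT θ hθ fun x y _ f hf => hconst f hf x y ▸ Iff.rfl with hdiag | huniv
  · exact hab (hdiag a b (by simp [θ]))
  · have := (huniv a c).1 (Or.inl rfl)
    tauto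

lemma IsPrimitive.forall_of_rel_ne (hT : IsPrimitive T)
    (hclosed : ∀ f ∈ T, ∀ g ∈ T, f ∘ g ∈ T) {θ : Y → Y → Prop} (hθ : Equivalence θ)
    {p q : Y} (hpq : p ≠ q) (hθpq : θ p q) (hθT : ∀ f ∈ T, θ (f p) (f q)) :
    ∀ a b, θ a b := by
  let χ : Y → Y → Prop := fun u v => θ u v ∧ ∀ f ∈ T, θ (f u) (f v)
  have hχ : Equivalence χ :=
    ⟨fun _ => ⟨hθ.refl _, fun _ _ => hθ.refl _⟩,
     fun h => ⟨hθ.symm h.1, fun f hf => hθ.symm (h.2 f hf)⟩,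
     fun h₁ h₂ => ⟨hθ.trans h₁.1 h₂.1, fun f hf => hθ.trans (h₁.2 f hf) (h₂.2 f hf)⟩⟩
  have hχT : IsCompatible T χ := fun u v h g hg =>
    ⟨h.2 g hg, fun f hf => h.2 (f ∘ g) (hclosed f hf g hg)⟩
  rcases hT χ hχ hχT with hdiag | huniv
  · exact absurd (hdiag p q ⟨hθpq, hθT⟩) hpq
  · exact fun a b => (huniv a b).1

lemma IsPrimitive.minFun_rel_of_rel_ne [Finite Y] (hT : IsPrimitive T)
    (hclosed : ∀ f ∈ T, ∀ g ∈ T, f ∘ g ∈ T) {θ : Y → Y → Prop} (hθ : Equivalence θ)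
    (hθJ : IsCompatible {f | MinFun T f} θ) {a b : Y} (hab : a ≠ b) (hθab : θ a b) :
    ∀ x y, ∀ j, MinFun T j → θ (j x) (j y) := by
  have : Nonempty Y := ⟨a⟩
  let τ : Y → Y → Prop := fun x y => ∀ j, MinFun T j → θ (j x) (j y)
  have hτ : Equivalence τ :=
    ⟨fun _ _ _ => hθ.refl _,
     fun h j hj => hθ.symm (h j hj),
     fun h₁ h₂ j hj => hθ.trans (h₁ j hj) (h₂ j hj)⟩
  have hτT : IsCompatible T τ := by
    intro x y hxy g hg j hj
    rcases hj.comp_or_isConst (hclosed j hj.1 g hg) with hjg | ⟨c, hc⟩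
    · exact hxy _ hjg
    · change θ ((j ∘ g) x) ((j ∘ g) y)
      rw [hc, hc]
      exact hθ.refl c
  rcases hT τ hτ hτT with hdiag | huniv
  · exact absurd (hdiag a b fun j hj => hθJ a b hθab j hj) hab
  · exact huniv

theorem IsPrimitive.isPrimitive_setOf_minFun [Fintype Y] (hT : IsPrimitive T)
    (hclosed : ∀ f ∈ T, ∀ g ∈ T, f ∘ g ∈ T) (hY : 2 < Fintype.card Y) :
    IsPrimitive {f | MinFun T f} := by
  intro θ hθ hθJ
  refine or_iff_not_imp_left.2 fun hdiag => ?_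
  push Not at hdiag
  obtain ⟨a, b, hθab, hab⟩ := hdiag
  have hτ := hT.minFun_rel_of_rel_ne hclosed hθ hθJ hab hθab
  obtain ⟨f₀, hf₀⟩ := exists_isMinRank (hT.exists_two_le_ncard_range hY)
  obtain ⟨x, y, hxy⟩ := two_le_ncard_range_iff.1 hf₀.2.1
  refine hT.forall_of_rel_ne hclosed hθ hxy (hτ x y f₀ hf₀.minFun) fun g hg => ?_
  by_cases hgxy : g (f₀ x) = g (f₀ y)
  · exact hgxy ▸ hθ.refl _
  · exact hτ x y (g ∘ f₀)
      (hf₀.comp (hclosed g hg f₀ hf₀.1) (two_le_ncard_range_iff.2 ⟨x, y, hgxy⟩)).minFun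

end CompatibleRelations

theorem minimal_functions_rep_faithful_primitive_c_general {S Y : Type*} [Semigroup S]
    [Fintype Y] (γ : S → Y → Y) (hγ : ∀ s t : S, γ (s * t) = γ s ∘ γ t)
    (hfaithful : Function.Injective γ)
    (hcard : 2 < Fintype.card Y)
    (hprim : ∀ θ : Y → Y → Prop, Equivalence θ →
      (∀ a b, θ a b → ∀ s : S, θ (γ s a) (γ s b)) →
      (∀ a b, θ a b → a = b) ∨ (∀ a b, θ a b)) :
    (∀ s t : S, MinFun (Set.range γ) (γ s) → MinFun (Set.range γ) (γ t) →
      γ s = γ t → s = t) ∧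
    (∀ θ : Y → Y → Prop, Equivalence θ →
      (∀ a b, θ a b → ∀ s : S, MinFun (Set.range γ) (γ s) → θ (γ s a) (γ s b)) →
      (∀ a b, θ a b → a = b) ∨ (∀ a b, θ a b)) ∧
    (∀ s t : S, MinFun (Set.range γ) (γ s) → MinFun (Set.range γ) (γ t) →
      (∃ u : S, MinFun (Set.range γ) (γ u) ∧ γ s ∘ γ t = γ u) ∨
        IsConst (γ s ∘ γ t)) := by
  have hclosed : ∀ f ∈ Set.range γ, ∀ g ∈ Set.range γ, f ∘ g ∈ Set.range γ := by
    rintro _ ⟨s, rfl⟩ _ ⟨t, rfl⟩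
    exact ⟨s * t, hγ s t⟩
  have hT : IsPrimitive (Set.range γ) := fun θ hθ hθT =>
    hprim θ hθ fun a b hab s => hθT a b hab _ ⟨s, rfl⟩
  refine ⟨fun s t _ _ h => hfaithful h, fun θ hθ hθJ => ?_, fun s t hs _ => ?_⟩
  · refine hT.isPrimitive_setOf_minFun hclosed hcard θ hθ fun a b hab f hf => ?_
    obtain ⟨s, rfl⟩ := hf.1
    exact hθJ a b hab s hf
  · have : Nonempty Y := Fintype.card_pos_iff.1 (by omega)
    rcases hs.comp_or_isConst (hclosed _ ⟨s, rfl⟩ _ ⟨t, rfl⟩) with h | h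
    · exact Or.inl ⟨s * t, hγ s t ▸ h, (hγ s t).symm⟩
    · exact Or.inr h

/-- If `(Y;S)` is a faithful primitive representation with `|Y| > 2` and
`J = {s ∈ S : γ(s) is a minimal function}`, then the representation `(Y;J)` is faithful,
primitive, and a c-representation: the composite of (the transformations of) two elements
of `J` is again (the transformation of) an element of `J` or a constant function. -/
theorem minimal_functions_rep_faithful_primitive_c {S Y : Type*} [Semigroup S] [Fintype S]
    [Fintype Y] (γ : S → Y → Y) (hγ : ∀ s t : S, γ (s * t) = γ s ∘ γ t)
    (hfaithful : Function.Injective γ)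
    (hcard : 2 < Fintype.card Y)
    (hprim : ∀ θ : Y → Y → Prop, Equivalence θ →
      (∀ a b, θ a b → ∀ s : S, θ (γ s a) (γ s b)) →
      (∀ a b, θ a b → a = b) ∨ (∀ a b, θ a b)) :
    (∀ s t : S, MinFun (Set.range γ) (γ s) → MinFun (Set.range γ) (γ t) →
      γ s = γ t → s = t) ∧
    (∀ θ : Y → Y → Prop, Equivalence θ →
      (∀ a b, θ a b → ∀ s : S, MinFun (Set.range γ) (γ s) → θ (γ s a) (γ s b)) →
      (∀ a b, θ a b → a = b) ∨ (∀ a b, θ a b)) ∧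
    (∀ s t : S, MinFun (Set.range γ) (γ s) → MinFun (Set.range γ) (γ t) →
      (∃ u : S, MinFun (Set.range γ) (γ u) ∧ γ s ∘ γ t = γ u) ∨
        IsConst (γ s ∘ γ t)) :=
  minimal_functions_rep_faithful_primitive_c_general γ hγ hfaithful hcard hprim
end

section
/- Let (Y;S) be a faithful primitive representation with |Y| > 2, where S is a semigroup of transformations of the finite set Y, and let J be the set of minimal functions of (Y;S). Then: (1) S^Y is a subsemigroup of Ω(J^Y), i.e., for every s ∈ S^Y and j ∈ J^Y both s∘j and j∘s lie in J^Y; and (2) the representation (Y; Ω(J^Y)) is faithful and primitive, and its set of minimal functions is exactly J. -/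
section TransformationReps

variable {Y : Type*}

/-- Expansion by constants: `T` together with all constant functions of `Y`. -/
def ExpandConst (T : Set (Y → Y)) : Set (Y → Y) := T ∪ {f | IsConst f}

/-- The translational hull `Ω(T)` of a set `T` of transformations of `Y`. -/
def Omega (T : Set (Y → Y)) : Set (Y → Y) :=
  {f | ∀ t ∈ T, f ∘ t ∈ T ∧ t ∘ f ∈ T}

end TransformationReps

/-!
Primitivity is used twice, always through a relation on `Y` that is compatible with `S` and
not the diagonal. The common kernel of the maps with image in a minimal set `W` is such a
relation, so it is trivial: every two points are separated by an element of `S` with image `W`.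
This makes all minimal sets equally large, turns every non-singleton image of a minimal set into
a minimal set, and gives a retraction onto each minimal set (an iterate of a separating map,
which permutes `W`); together these prove `S^Y ⊆ Ω(J^Y)`. Likewise the equivalence relation
generated by the minimal sets is universal, so a non-constant map `f` is non-constant on some
minimal set. For `f` minimal in `Ω(J^Y)` this yields `j ∈ J` with `f ∘ j ∈ J`, whose image is then
the image of `f`; composing `f` with the retraction onto it shows `f ∈ J`.
-/

open Set Function

section MinimalSets

variable {Y : Type*} {S T : Set (Y → Y)} {f j p s t F : Y → Y} {U V W : Set Y} {a b : Y}

theorem IsConst.comp (hf : IsConst f) (g : Y → Y) : IsConst (g ∘ f) :=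
  let ⟨c, hc⟩ := hf
  ⟨g c, fun y => congrArg g (hc y)⟩

theorem IsConst.comp_right (hf : IsConst f) (g : Y → Y) : IsConst (f ∘ g) :=
  let ⟨c, hc⟩ := hf
  ⟨c, fun y => hc (g y)⟩

theorem mem_expandConst_of_not_isConst (h : ¬ IsConst f → f ∈ T) : f ∈ ExpandConst T := by
  by_cases hf : IsConst f
  · exact Or.inr hf
  · exact Or.inl (h hf)

theorem PrimitiveRep.mono (h : PrimitiveRep S) (hST : S ⊆ T) : PrimitiveRep T :=
  fun θ hθ hcompat => h θ hθ fun a b hab f hf => hcompat a b hab f (hST hf)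

theorem PrimitiveRep.eqvGen_universal (hprim : PrimitiveRep S) {r : Y → Y → Prop}
    (hr : ∀ x y, r x y → ∀ f ∈ S, Relation.EqvGen r (f x) (f y)) (hab : r a b) (hne : a ≠ b)
    (x y : Y) : Relation.EqvGen r x y := by
  refine (hprim _ (Relation.EqvGen.is_equivalence r) (fun c d hcd f hf => ?_)).resolve_left
    (fun h => hne (h a b (.rel a b hab))) x y
  induction hcd with
  | rel c d h => exact hr c d h f hf
  | refl => exact .refl _
  | symm _ _ _ ih => exact .symm _ _ ih
  | trans _ _ _ _ _ ih₁ ih₂ => exact .trans _ _ _ ih₁ ih₂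

theorem MinSet.eq_of_subset (hW : MinSet S W) (hV : MinSet S V) (h : V ⊆ W) : V = W := by
  obtain ⟨v, hv, rfl⟩ := hV.2.1
  exact hW.2.2 v hv hV.1 h

theorem iterate_succ_mem (hmul : ∀ f ∈ S, ∀ g ∈ S, f ∘ g ∈ S) (hp : p ∈ S) :
    ∀ n, p^[n + 1] ∈ S
  | 0 => hp
  | n + 1 => by
    rw [iterate_succ']
    exact hmul p hp _ (iterate_succ_mem hmul hp n)

variable [Finite Y]

theorem Set.BijOn.exists_iterate_succ_eqOn_id (h : BijOn p U U) : ∃ n, EqOn p^[n + 1] id U := by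
  have := Fintype.ofFinite U
  have hg : (h.mapsTo.restrict p U U)^[(Fintype.card U).factorial] = id :=
    injective_iff_iterate_factorial_card_eq_id.mp (h.mapsTo.restrict_inj.mpr h.injOn)
  obtain ⟨n, hn⟩ := Nat.exists_eq_add_one_of_ne_zero (Nat.factorial_ne_zero (Fintype.card U))
  refine ⟨n, fun x hx => ?_⟩
  have hsemiconj : Semiconj Subtype.val (h.mapsTo.restrict p U U) p := fun _ => rfl
  rw [← hn, ← hsemiconj.iterate_right _ ⟨x, hx⟩, hg]
  rfl

theorem two_le_ncard_image_of_ne (ha : a ∈ U) (hb : b ∈ U) (h : f a ≠ f b) :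
    2 ≤ (f '' U).ncard :=
  one_lt_ncard_iff_nontrivial.mpr ⟨f a, mem_image_of_mem f ha, f b, mem_image_of_mem f hb, h⟩

theorem two_le_ncard_range_of_ne (h : f a ≠ f b) : 2 ≤ (range f).ncard := by
  simpa only [image_univ] using two_le_ncard_image_of_ne (mem_univ a) (mem_univ b) h

theorem two_le_ncard_range_iff_s16 [Nonempty Y] : 2 ≤ (range f).ncard ↔ ¬ IsConst f := by
  constructor
  · rintro h ⟨c, hc⟩
    obtain ⟨_, ⟨x, rfl⟩, _, ⟨y, rfl⟩, hxy⟩ := one_lt_ncard_iff_nontrivial.mp h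
    exact hxy ((hc x).trans (hc y).symm)
  · intro h
    obtain ⟨a, ha⟩ := not_forall.mp (not_exists.mp h (f (Classical.arbitrary Y)))
    exact two_le_ncard_range_of_ne ha

theorem exists_minSet_subset_range (ht : t ∈ S) (h2 : 2 ≤ (range t).ncard) :
    ∃ W, MinSet S W ∧ W ⊆ range t := by
  let F : Set (Set Y) := {W | ∃ u ∈ S, range u = W ∧ 2 ≤ W.ncard ∧ W ⊆ range t}
  obtain ⟨_, ⟨u, hu, rfl, hu2, hut⟩, hmin⟩ :=
    (toFinite F).exists_minimal ⟨range t, t, ht, rfl, h2, subset_rfl⟩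
  exact ⟨range u, ⟨hu2, ⟨u, hu, rfl⟩, fun v hv hv2 hvu =>
    hvu.antisymm (hmin ⟨v, hv, rfl, hv2, hvu.trans hut⟩ hvu)⟩, hut⟩

theorem PrimitiveRep.exists_minSet (hprim : PrimitiveRep S) (hcard : 2 < Nat.card Y) :
    ∃ W, MinSet S W := by
  have := Fintype.ofFinite Y
  obtain ⟨y₀, y₁, y₂, h01, h02, h12⟩ :=
    Fintype.two_lt_card_iff.mp (Fintype.card_eq_nat_card ▸ hcard)
  obtain ⟨f, hf, a, b, hab⟩ : ∃ f ∈ S, ∃ a b, f a ≠ f b := by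
    by_contra! hS
    -- a semigroup of constant maps is compatible with every equivalence relation
    rcases hprim (fun a b => a = y₀ ↔ b = y₀) ⟨fun _ => Iff.rfl, Iff.symm, Iff.trans⟩
      (fun a b _ f hf => by rw [hS f hf a b]) with hdiag | huniv
    · exact h12 (hdiag y₁ y₂ (iff_of_false h01.symm h02.symm))
    · exact h01 ((huniv y₀ y₁).mp rfl).symm
  obtain ⟨W, hW, -⟩ := exists_minSet_subset_range hf (two_le_ncard_range_of_ne hab)
  exact ⟨W, hW⟩

section Semigroup

variable (hmul : ∀ f ∈ S, ∀ g ∈ S, f ∘ g ∈ S) (hprim : PrimitiveRep S)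
include hmul hprim

theorem MinSet.exists_separating (hW : MinSet S W) (hab : a ≠ b) :
    ∃ p ∈ S, range p = W ∧ p a ≠ p b := by
  let θ : Y → Y → Prop := fun c d => ∀ p ∈ S, range p ⊆ W → p c = p d
  have hθ : Equivalence θ :=
    ⟨fun _ _ _ _ => rfl, fun h p hp hpW => (h p hp hpW).symm,
      fun h₁ h₂ p hp hpW => (h₁ p hp hpW).trans (h₂ p hp hpW)⟩
  have hcompat : ∀ c d, θ c d → ∀ f ∈ S, θ (f c) (f d) := fun c d h f hf p hp hpW =>
    h (p ∘ f) (hmul p hp f hf) ((range_comp_subset_range f p).trans hpW)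
  rcases hprim θ hθ hcompat with hdiag | huniv
  · obtain ⟨p, hp, hpW, hne⟩ : ∃ p ∈ S, range p ⊆ W ∧ p a ≠ p b := by
      by_contra! h
      exact hab (hdiag a b h)
    exact ⟨p, hp, hW.2.2 p hp (two_le_ncard_range_of_ne hne) hpW, hne⟩
  · obtain ⟨s, hs, rfl⟩ := hW.2.1
    obtain ⟨_, ⟨x, rfl⟩, _, ⟨y, rfl⟩, hxy⟩ := one_lt_ncard_iff_nontrivial.mp hW.1
    exact absurd (huniv x y s hs subset_rfl) hxy

theorem MinSet.ncard_le (hU : MinSet S U) (hW : MinSet S W) : W.ncard ≤ U.ncard := by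
  obtain ⟨a, ha, b, hb, hab⟩ := one_lt_ncard_iff_nontrivial.mp hU.1
  obtain ⟨p, hp, rfl, hne⟩ := hW.exists_separating hmul hprim hab
  obtain ⟨s, hs, rfl⟩ := hU.2.1
  have hps : range (p ∘ s) = range p :=
    hW.2.2 _ (hmul p hp s hs) (range_comp p s ▸ two_le_ncard_image_of_ne ha hb hne)
      (range_comp_subset_range s p)
  rw [← hps, range_comp]
  exact ncard_image_le

theorem MinSet.image (hU : MinSet S U) (hs : s ∈ S) (h2 : 2 ≤ (s '' U).ncard) :
    MinSet S (s '' U) := by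
  obtain ⟨u, hu, rfl⟩ := hU.2.1
  obtain ⟨W, hW, hWs⟩ := exists_minSet_subset_range (hmul s hs u hu) (range_comp s u ▸ h2)
  rw [range_comp] at hWs
  have hWeq : W = s '' range u :=
    eq_of_subset_of_ncard_le hWs ((ncard_image_le (toFinite _)).trans (hW.ncard_le hmul hprim hU))
  exact hWeq ▸ hW

theorem MinFun.comp (hj : MinFun S j) (hs : s ∈ S) (h2 : 2 ≤ (range (s ∘ j)).ncard) :
    MinFun S (s ∘ j) :=
  ⟨hmul s hs j hj.1, range_comp s j ▸ hj.2.image hmul hprim hs (range_comp s j ▸ h2)⟩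

omit [Finite Y] hprim in
theorem MinFun.comp_right (hj : MinFun S j) (hs : s ∈ S) (h2 : 2 ≤ (range (j ∘ s)).ncard) :
    MinFun S (j ∘ s) :=
  ⟨hmul j hj.1 s hs, hj.2.2.2 _ (hmul j hj.1 s hs) h2 (range_comp_subset_range s j) ▸ hj.2⟩

theorem expandConst_subset_omega [Nonempty Y] :
    ExpandConst S ⊆ Omega (ExpandConst {f | MinFun S f}) := by
  rintro s (hs | hs) j (hj | hj)
  · exact ⟨mem_expandConst_of_not_isConst fun h =>
        hj.comp hmul hprim hs (two_le_ncard_range_iff_s16.mpr h),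
      mem_expandConst_of_not_isConst fun h => hj.comp_right hmul hs (two_le_ncard_range_iff_s16.mpr h)⟩
  · exact ⟨Or.inr (hj.comp s), Or.inr (hj.comp_right s)⟩
  · exact ⟨Or.inr (hs.comp_right j), Or.inr (hs.comp j)⟩
  · exact ⟨Or.inr (hj.comp s), Or.inr (hj.comp_right s)⟩

theorem MinSet.exists_retraction (hU : MinSet S U) : ∃ e ∈ S, range e = U ∧ ∀ x ∈ U, e x = x := by
  obtain ⟨a, ha, b, hb, hab⟩ := one_lt_ncard_iff_nontrivial.mp hU.1
  obtain ⟨p, hp, hpU, hne⟩ := hU.exists_separating hmul hprim hab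
  have hmaps : MapsTo p U U := fun x _ => hpU ▸ mem_range_self x
  have himage : p '' U = U :=
    hU.eq_of_subset (hU.image hmul hprim hp (two_le_ncard_image_of_ne ha hb hne)) hmaps.image_subset
  have hbij : BijOn p U U :=
    ((toFinite U).surjOn_iff_bijOn_of_mapsTo hmaps).mp himage.symm.subset
  obtain ⟨n, hid⟩ := hbij.exists_iterate_succ_eqOn_id
  refine ⟨p^[n + 1], iterate_succ_mem hmul hp n, subset_antisymm ?_ fun x hx => ⟨x, hid hx⟩, hid⟩
  rw [iterate_succ', ← hpU]
  exact range_comp_subset_range _ p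

theorem exists_minFun_not_isConst_comp (hW : MinSet S W) (hF : ¬ IsConst F) :
    ∃ j, MinFun S j ∧ ¬ IsConst (F ∘ j) := by
  let r : Y → Y → Prop := fun x y => ∃ V, MinSet S V ∧ x ∈ V ∧ y ∈ V
  have hr : ∀ x y, r x y → ∀ f ∈ S, Relation.EqvGen r (f x) (f y) := by
    rintro x y ⟨V, hV, hx, hy⟩ f hf
    by_cases hfxy : f x = f y
    · exact hfxy ▸ .refl _
    · exact .rel _ _ ⟨f '' V, hV.image hmul hprim hf (two_le_ncard_image_of_ne hx hy hfxy),
        mem_image_of_mem f hx, mem_image_of_mem f hy⟩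
  obtain ⟨a, ha, b, hb, hab⟩ := one_lt_ncard_iff_nontrivial.mp hW.1
  have huniv := hprim.eqvGen_universal hr ⟨W, hW, ha, hb⟩ hab
  by_contra! hconst
  have hker : ∀ x y, r x y → Setoid.ker F x y := by
    rintro _ _ ⟨V, hV, hx, hy⟩
    obtain ⟨j, hj, rfl⟩ := hV.2.1
    obtain ⟨c, hc⟩ := hconst j ⟨hj, hV⟩
    obtain ⟨x, rfl⟩ := hx
    obtain ⟨y, rfl⟩ := hy
    exact (hc x).trans (hc y).symm
  exact hF ⟨F a, fun y => Setoid.eqvGen_le hker (huniv y a)⟩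

theorem MinSet.minSet_omega [Nonempty Y] (hU : MinSet S U) :
    MinSet (Omega (ExpandConst {f | MinFun S f})) U := by
  refine ⟨hU.1, ?_, fun t ht ht2 htU => ?_⟩
  · obtain ⟨s, hs, rfl⟩ := hU.2.1
    exact ⟨s, expandConst_subset_omega hmul hprim (Or.inl hs), rfl⟩
  · obtain ⟨_, ⟨x, rfl⟩, _, ⟨y, rfl⟩, hxy⟩ := one_lt_ncard_iff_nontrivial.mp ht2
    obtain ⟨p, hp, rfl, hne⟩ := hU.exists_separating hmul hprim hxy
    have hpt : MinFun S (p ∘ t) :=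
      (ht p (Or.inl ⟨hp, hU⟩)).2.resolve_right fun ⟨c, hc⟩ => hne ((hc x).trans (hc y).symm)
    have hrange : range (p ∘ t) = range p := hU.eq_of_subset hpt.2 (range_comp_subset_range t p)
    exact eq_of_subset_of_ncard_le htU (hrange ▸ range_comp p t ▸ ncard_image_le)

theorem minFun_of_minFun_omega [Nonempty Y] (hW : MinSet S W)
    (hf : MinFun (Omega (ExpandConst {f | MinFun S f})) f) : MinFun S f := by
  have hfnc : ¬ IsConst f := two_le_ncard_range_iff_s16.mp hf.2.1
  obtain ⟨j, hj, hfj⟩ := exists_minFun_not_isConst_comp hmul hprim hW hfnc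
  have hfjJ : MinFun S (f ∘ j) := (hf.1 j (Or.inl hj)).1.resolve_right hfj
  have hrange : range (f ∘ j) = range f :=
    hf.2.2.2 _ (expandConst_subset_omega hmul hprim (Or.inl hfjJ.1)) hfjJ.2.1
      (range_comp_subset_range j f)
  have hmin : MinSet S (range f) := hrange ▸ hfjJ.2
  obtain ⟨e, he, her, hfix⟩ := hmin.exists_retraction hmul hprim
  have hef : e ∘ f = f := funext fun y => hfix _ (mem_range_self y)
  exact (hef ▸ (hf.1 e (Or.inl ⟨he, her ▸ hmin⟩)).2).resolve_right hfnc

end Semigroup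

end MinimalSets

/-- Let `(Y;S)` be a (faithful) primitive representation with `|Y| > 2`, where `S` is a
semigroup of transformations of `Y`, and let `J` be its set of minimal functions.  Then:
(1) `S^Y ⊆ Ω(J^Y)`, i.e. for every `s ∈ S^Y` and `j ∈ J^Y`, both `s∘j` and `j∘s` lie in
`J^Y`; and (2) the representation `(Y; Ω(J^Y))` is faithful and primitive, and its set of
minimal functions is exactly `J`. -/
theorem semigroup_in_translational_hull {Y : Type*} [Fintype Y]
    (S : Set (Y → Y)) (hmul : ∀ f ∈ S, ∀ g ∈ S, f ∘ g ∈ S)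
    (hcard : 2 < Fintype.card Y)
    (hprim : PrimitiveRep S) :
    (∀ s ∈ ExpandConst S, ∀ j ∈ ExpandConst {f | MinFun S f},
      s ∘ j ∈ ExpandConst {f | MinFun S f} ∧
        j ∘ s ∈ ExpandConst {f | MinFun S f}) ∧
    (∀ f ∈ Omega (ExpandConst {f | MinFun S f}),
      ∀ g ∈ Omega (ExpandConst {f | MinFun S f}), (∀ y, f y = g y) → f = g) ∧
    PrimitiveRep (Omega (ExpandConst {f | MinFun S f})) ∧
    {f | f ∈ Omega (ExpandConst {g | MinFun S g}) ∧
        MinFun (Omega (ExpandConst {g | MinFun S g})) f} =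
      {f | MinFun S f} := by
  have : Nonempty Y := Fintype.card_pos_iff.mp (by omega)
  obtain ⟨W, hW⟩ := hprim.exists_minSet (Fintype.card_eq_nat_card ▸ hcard)
  have hΩ := expandConst_subset_omega hmul hprim
  refine ⟨fun s hs => hΩ hs, fun f _ g _ h => funext h, hprim.mono (subset_union_left.trans hΩ), ?_⟩
  ext f
  exact ⟨fun hf => minFun_of_minFun_omega hmul hprim hW hf.2,
    fun hf => ⟨hΩ (Or.inl hf.1), hΩ (Or.inl hf.1), hf.2.minSet_omega hmul hprim⟩⟩
end
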